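/- arXiv:math/0510257 — 5 statements merged into one kernel-verified Lean document; each statement's English description precedes it below -/
import Mathlib

section
/- For any two probability measures ν₁, ν₂ on a Polish metric space, φ(d_P(ν₁,ν₂)) ≤ d_FM(ν₁,ν₂), where φ(u) = 2u²/(2+u). -/
open MeasureTheory Set
open scoped ENNReal NNReal

/-- The Fortet–Mourier (bounded Lipschitz) distance: the supremum of `∫ f dν₁ - ∫ f dν₂`
over functions with sup norm plus Lipschitz constant at most 1. -/
noncomputable def fortetMourier {E : Type*} [MeasurableSpace E] [PseudoMetricSpace E]
    (ν₁ ν₂ : Measure E) : ℝ :=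
  sSup {r | ∃ (f : E → ℝ) (C L : ℝ), 0 ≤ C ∧ 0 ≤ L ∧ C + L ≤ 1 ∧
    (∀ x, |f x| ≤ C) ∧ LipschitzWith (Real.toNNReal L) f ∧
    r = (∫ x, f x ∂ν₁) - ∫ x, f x ∂ν₂}

namespace FMaux

open Metric

set_option linter.unusedSectionVars false
set_option linter.unusedVariables false

variable {E : Type*} [MeasurableSpace E] [PseudoMetricSpace E]

lemma abs_infDist_sub_le (B : Set E) (x y : E) : |infDist x B - infDist y B| ≤ dist x y := by
  rw [abs_sub_le_iff]
  constructor <;> [skip; rw [dist_comm]] <;>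
    linarith [infDist_le_infDist_add_dist (x := x) (y := y) (s := B),
      infDist_le_infDist_add_dist (x := y) (y := x) (s := B)]

/-- The bump function used in the proof. -/
noncomputable def bump (B : Set E) (t c : ℝ) (x : E) : ℝ :=
  c * (max (1 - infDist x B / t) 0 - 1 / 2)

lemma bump_lipschitz (B : Set E) {t c : ℝ} (ht : 0 < t) (hc : 0 ≤ c) :
    LipschitzWith (Real.toNNReal (c / t)) (bump B t c) := by
  apply LipschitzWith.of_dist_le_mul
  intro x y
  have hK : (Real.toNNReal (c / t) : ℝ) = c / t := Real.coe_toNNReal _ (by positivity)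
  rw [hK, Real.dist_eq]
  have h1 : |bump B t c x - bump B t c y|
      = c * |max (1 - infDist x B / t) 0 - max (1 - infDist y B / t) 0| := by
    rw [bump, bump, ← mul_sub, abs_mul, abs_of_nonneg hc]
    ring_nf
  rw [h1]
  have h2 : |max (1 - infDist x B / t) 0 - max (1 - infDist y B / t) 0|
      ≤ |(1 - infDist x B / t) - (1 - infDist y B / t)| := abs_max_sub_max_le_abs _ _ _
  have h3 : |(1 - infDist x B / t) - (1 - infDist y B / t)|
      = |infDist x B - infDist y B| / t := by
    have he : (1 - infDist x B / t) - (1 - infDist y B / t)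
        = (infDist y B - infDist x B) / t := by field_simp; ring
    rw [he, abs_div, abs_of_pos ht, abs_sub_comm]
  have h4 := abs_infDist_sub_le B x y
  calc c * |max (1 - infDist x B / t) 0 - max (1 - infDist y B / t) 0|
      ≤ c * (|infDist x B - infDist y B| / t) := by
        rw [h3] at h2; exact mul_le_mul_of_nonneg_left h2 hc
    _ ≤ c * (dist x y / t) := by
        apply mul_le_mul_of_nonneg_left _ hc
        gcongr
    _ = c / t * dist x y := by ring

lemma bump_abs_le (B : Set E) {t c : ℝ} (ht : 0 < t) (hc : 0 ≤ c) (x : E) :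
    |bump B t c x| ≤ c / 2 := by
  rw [bump, abs_mul, abs_of_nonneg hc]
  have h0 : 0 ≤ infDist x B := infDist_nonneg
  have hle : max (1 - infDist x B / t) 0 ≤ 1 := by
    apply max_le _ zero_le_one
    have : 0 ≤ infDist x B / t := by positivity
    linarith
  have hge : 0 ≤ max (1 - infDist x B / t) 0 := le_max_right _ _
  have habs : |max (1 - infDist x B / t) 0 - 1 / 2| ≤ 1 / 2 := by
    rw [abs_le]; constructor <;> linarith
  calc c * |max (1 - infDist x B / t) 0 - 1 / 2| ≤ c * (1 / 2) :=
        mul_le_mul_of_nonneg_left habs hc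
    _ = c / 2 := by ring

lemma bump_continuous (B : Set E) {t c : ℝ} (ht : 0 < t) (hc : 0 ≤ c) :
    Continuous (bump B t c) :=
  (bump_lipschitz B ht hc).continuous

lemma bump_integrable (B : Set E) {t c : ℝ} (ht : 0 < t) (hc : 0 ≤ c)
    [OpensMeasurableSpace E] (μ : Measure E) [IsFiniteMeasure μ] :
    Integrable (bump B t c) μ := by
  refine ⟨(bump_continuous B ht hc).aestronglyMeasurable, ?_⟩
  exact HasFiniteIntegral.of_bounded (C := c / 2) (ae_of_all _ fun x => by
    simpa [Real.norm_eq_abs] using bump_abs_le B ht hc x)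

lemma bump_ge_on (B : Set E) {t c : ℝ} (ht : 0 < t) (hc : 0 ≤ c) {x : E} (hx : x ∈ B) :
    c * (1 / 2) ≤ bump B t c x := by
  rw [bump, infDist_zero_of_mem hx]
  simp only [zero_div, sub_zero]
  rw [max_eq_left zero_le_one]
  linarith

lemma bump_le_of_not_mem (B : Set E) (hBne : B.Nonempty) {t c : ℝ} (ht : 0 < t) (hc : 0 ≤ c)
    {x : E} (hx : x ∉ thickening t B) : bump B t c x ≤ -(c * (1 / 2)) := by
  have h : t ≤ infDist x B := by
    by_contra h
    push_neg at h
    exact hx ((Metric.mem_thickening_iff_infDist_lt hBne).mpr h)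
  have : 1 - infDist x B / t ≤ 0 := by
    rw [sub_nonpos]
    rw [le_div_iff₀ ht]
    linarith
  rw [bump, max_eq_right this]
  linarith

lemma bump_le (B : Set E) {t c : ℝ} (ht : 0 < t) (hc : 0 ≤ c) (x : E) :
    bump B t c x ≤ c * (1 / 2) := by
  have := bump_abs_le B ht hc x
  rw [abs_le] at this
  linarith [this.2]

lemma neg_bump_ge (B : Set E) {t c : ℝ} (ht : 0 < t) (hc : 0 ≤ c) (x : E) :
    -(c * (1 / 2)) ≤ bump B t c x := by
  have := bump_abs_le B ht hc x
  rw [abs_le] at this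
  linarith [this.1]



section Integrals

variable {E : Type*} [MeasurableSpace E] [PseudoMetricSpace E] [OpensMeasurableSpace E]

lemma integral_bump_ge (μ : Measure E) [IsProbabilityMeasure μ]
    {B : Set E} (hB : MeasurableSet B) {t c : ℝ} (ht : 0 < t) (hc : 0 ≤ c) :
    c * (μ B).toReal - c / 2 ≤ ∫ x, bump B t c x ∂μ := by
  have hint := bump_integrable B ht hc μ
  have hind : Integrable (fun x => B.indicator (fun _ => c) x - c / 2) μ :=
    ((integrable_const c).indicator hB).sub (integrable_const _)
  have hle : ∀ x, B.indicator (fun _ => c) x - c / 2 ≤ bump B t c x := by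
    intro x
    by_cases hx : x ∈ B
    · have := bump_ge_on B ht hc hx
      simp only [indicator_of_mem hx]
      linarith
    · have := neg_bump_ge B ht hc x
      simp only [indicator_of_notMem hx]
      linarith
  have h1 : ∫ x, (B.indicator (fun _ => c) x - c / 2) ∂μ = c * (μ B).toReal - c / 2 := by
    rw [integral_sub ((integrable_const c).indicator hB) (integrable_const _),
      integral_indicator_const _ hB, integral_const]
    simp [measure_univ, mul_comm]
    exact Or.inl rfl
  rw [← h1]
  exact integral_mono hind hint hle

lemma integral_bump_le (μ : Measure E) [IsProbabilityMeasure μ]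
    {B : Set E} (hBne : B.Nonempty) {t c : ℝ} (ht : 0 < t) (hc : 0 ≤ c) :
    ∫ x, bump B t c x ∂μ ≤ c * (μ (thickening t B)).toReal - c / 2 := by
  have hT : MeasurableSet (thickening t B) := isOpen_thickening.measurableSet
  have hint := bump_integrable B ht hc μ
  have hind : Integrable (fun x => (thickening t B).indicator (fun _ => c) x - c / 2) μ :=
    ((integrable_const c).indicator hT).sub (integrable_const _)
  have hle : ∀ x, bump B t c x ≤ (thickening t B).indicator (fun _ => c) x - c / 2 := by
    intro x
    by_cases hx : x ∈ thickening t B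
    · have := bump_le B ht hc x
      simp only [indicator_of_mem hx]
      linarith
    · have := bump_le_of_not_mem B hBne ht hc hx
      simp only [indicator_of_notMem hx]
      linarith
  have h1 : ∫ x, ((thickening t B).indicator (fun _ => c) x - c / 2) ∂μ
      = c * (μ (thickening t B)).toReal - c / 2 := by
    rw [integral_sub ((integrable_const c).indicator hT) (integrable_const _),
      integral_indicator_const _ hT, integral_const]
    simp [measure_univ, mul_comm]
    exact Or.inl rfl
  rw [← h1]
  exact integral_mono hint hind hle

end Integrals

end FMaux

namespace FMaux2

open Metric FMaux Filter

variable {E : Type*} [MeasurableSpace E] [PseudoMetricSpace E] [OpensMeasurableSpace E]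

/-- The defining set of the Fortet–Mourier distance. -/
def FMset (ν₁ ν₂ : Measure E) : Set ℝ :=
  {r | ∃ (f : E → ℝ) (C L : ℝ), 0 ≤ C ∧ 0 ≤ L ∧ C + L ≤ 1 ∧
    (∀ x, |f x| ≤ C) ∧ LipschitzWith (Real.toNNReal L) f ∧
    r = (∫ x, f x ∂ν₁) - ∫ x, f x ∂ν₂}

lemma fortetMourier_eq (ν₁ ν₂ : Measure E) : fortetMourier ν₁ ν₂ = sSup (FMset ν₁ ν₂) := rfl

lemma zero_mem_FMset (ν₁ ν₂ : Measure E) : (0 : ℝ) ∈ FMset ν₁ ν₂ := by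
  refine ⟨fun _ => 0, 0, 0, le_refl _, le_refl _, by norm_num, fun x => by simp, ?_, by simp⟩
  simpa using (LipschitzWith.const' (0 : ℝ) (K := Real.toNNReal 0))

lemma FMset_bddAbove (ν₁ ν₂ : Measure E) [IsProbabilityMeasure ν₁] [IsProbabilityMeasure ν₂] :
    BddAbove (FMset ν₁ ν₂) := by
  refine ⟨2, fun r hr => ?_⟩
  obtain ⟨f, C, L, hC, hL, hCL, hfC, -, hr⟩ := hr
  have hC1 : C ≤ 1 := by linarith
  have h1 : ‖∫ x, f x ∂ν₁‖ ≤ C * (ν₁ univ).toReal :=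
    norm_integral_le_of_norm_le_const (ae_of_all _ fun x => by
      simpa [Real.norm_eq_abs] using hfC x)
  have h2 : ‖∫ x, f x ∂ν₂‖ ≤ C * (ν₂ univ).toReal :=
    norm_integral_le_of_norm_le_const (ae_of_all _ fun x => by
      simpa [Real.norm_eq_abs] using hfC x)
  simp only [measure_univ, ENNReal.toReal_one, mul_one, Real.norm_eq_abs, abs_le] at h1 h2
  rw [hr]
  linarith [h1.2, h2.1]

lemma FMset_comm {ν₁ ν₂ : Measure E} {r : ℝ} (hr : r ∈ FMset ν₁ ν₂) : r ∈ FMset ν₂ ν₁ := by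
  obtain ⟨f, C, L, hC, hL, hCL, hfC, hlip, hr⟩ := hr
  refine ⟨fun x => -f x, C, L, hC, hL, hCL, fun x => by simpa using hfC x, ?_, ?_⟩
  · apply LipschitzWith.of_dist_le_mul
    intro x y
    simpa [dist_neg_neg] using hlip.dist_le_mul x y
  · simp only [integral_neg]
    rw [hr]; ring

lemma exists_mem_FMset (μ ν : Measure E) [IsProbabilityMeasure μ] [IsProbabilityMeasure ν]
    {B : Set E} (hB : MeasurableSet B) {t : ℝ} (ht : 0 < t)
    (hgap : (ν (thickening t B)).toReal + t < (μ B).toReal) :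
    ∃ r ∈ FMset μ ν, 2 * t ^ 2 / (2 + t) ≤ r := by
  set c : ℝ := 2 * t / (2 + t) with hc_def
  have h2t : (0:ℝ) < 2 + t := by linarith
  have hc : 0 ≤ c := by positivity
  have hBne : B.Nonempty := by
    rcases B.eq_empty_or_nonempty with h | h
    · exfalso
      rw [h] at hgap
      simp only [measure_empty, ENNReal.toReal_zero] at hgap
      have : (0:ℝ) ≤ (ν (thickening t ∅)).toReal := ENNReal.toReal_nonneg
      linarith
    · exact h
  refine ⟨(∫ x, bump B t c x ∂μ) - ∫ x, bump B t c x ∂ν, ?_, ?_⟩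
  · refine ⟨bump B t c, c / 2, c / t, by positivity, by positivity, ?_,
      bump_abs_le B ht hc, bump_lipschitz B ht hc, rfl⟩
    have : c / 2 + c / t = 1 := by
      rw [hc_def]
      field_simp
      ring
    linarith
  · have h1 := integral_bump_ge μ hB ht hc
    have h2 := integral_bump_le ν hBne ht hc
    have h3 : c * t ≤ c * ((μ B).toReal - (ν (thickening t B)).toReal) := by
      apply mul_le_mul_of_nonneg_left _ hc
      linarith
    have h4 : c * t = 2 * t ^ 2 / (2 + t) := by
      rw [hc_def]; field_simp
    linarith

end FMaux2

theorem phi_levyProkhorovDist_le_fortetMourier {E : Type*} [MetricSpace E] [CompleteSpace E]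
    [TopologicalSpace.SeparableSpace E] [MeasurableSpace E] [BorelSpace E]
    (ν₁ ν₂ : Measure E) [IsProbabilityMeasure ν₁] [IsProbabilityMeasure ν₂] :
    2 * (levyProkhorovDist ν₁ ν₂) ^ 2 / (2 + levyProkhorovDist ν₁ ν₂)
      ≤ fortetMourier ν₁ ν₂ := by
  classical
  set d := levyProkhorovDist ν₁ ν₂ with hd_def
  have hd0 : 0 ≤ d := ENNReal.toReal_nonneg
  have hbdd := FMaux2.FMset_bddAbove ν₁ ν₂
  have hFM0 : 0 ≤ fortetMourier ν₁ ν₂ :=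
    le_csSup hbdd (FMaux2.zero_mem_FMset ν₁ ν₂)
  -- key step: for 0 < t < d, φ(t) ≤ FM
  have key : ∀ t : ℝ, 0 < t → t < d → 2 * t ^ 2 / (2 + t) ≤ fortetMourier ν₁ ν₂ := by
    intro t ht htd
    have hne : levyProkhorovEDist ν₁ ν₂ ≠ ⊤ := levyProkhorovEDist_ne_top ν₁ ν₂
    have hlt : ENNReal.ofReal t < levyProkhorovEDist ν₁ ν₂ :=
      (ENNReal.ofReal_lt_iff_lt_toReal ht.le hne).mpr htd
    have hnotmem : ENNReal.ofReal t ∉ {ε : ℝ≥0∞ | ∀ B, MeasurableSet B →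
        ν₁ B ≤ ν₂ (Metric.thickening ε.toReal B) + ε ∧
        ν₂ B ≤ ν₁ (Metric.thickening ε.toReal B) + ε} := by
      intro hmem
      exact absurd (sInf_le hmem) (not_le.mpr hlt)
    simp only [Set.mem_setOf_eq] at hnotmem
    push_neg at hnotmem
    obtain ⟨B, hB, hor⟩ := hnotmem
    rw [ENNReal.toReal_ofReal ht.le] at hor
    -- convert the ℝ≥0∞ inequality into a real one
    have convert_gap : ∀ (μ ν : Measure E), IsProbabilityMeasure μ → IsProbabilityMeasure ν →
        ¬ μ B ≤ ν (Metric.thickening t B) + ENNReal.ofReal t →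
        (ν (Metric.thickening t B)).toReal + t < (μ B).toReal := by
      intro μ ν hμ hν h
      push_neg at h
      have h1 : ν (Metric.thickening t B) ≠ ⊤ := measure_ne_top _ _
      have h2 : μ B ≠ ⊤ := measure_ne_top _ _
      have := ENNReal.toReal_lt_toReal (by finiteness) h2 |>.mpr h
      rwa [ENNReal.toReal_add h1 ENNReal.ofReal_ne_top, ENNReal.toReal_ofReal ht.le] at this
    by_cases hP : ν₁ B ≤ ν₂ (Metric.thickening t B) + ENNReal.ofReal t
    · obtain ⟨r, hr, hφr⟩ := FMaux2.exists_mem_FMset ν₂ ν₁ hB ht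
        (convert_gap ν₂ ν₁ inferInstance inferInstance (not_le.mpr (hor hP)))
      exact hφr.trans (le_csSup hbdd (FMaux2.FMset_comm hr))
    · obtain ⟨r, hr, hφr⟩ := FMaux2.exists_mem_FMset ν₁ ν₂ hB ht
        (convert_gap ν₁ ν₂ inferInstance inferInstance hP)
      exact hφr.trans (le_csSup hbdd hr)
  -- conclude by continuity
  rcases eq_or_lt_of_le hd0 with h0 | h0
  · rw [← h0]
    simpa using hFM0
  · have hcont : Filter.Tendsto (fun u : ℝ => 2 * u ^ 2 / (2 + u)) (nhdsWithin d (Set.Iio d))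
        (nhds (2 * d ^ 2 / (2 + d))) := by
      apply Filter.Tendsto.mono_left _ nhdsWithin_le_nhds
      exact (ContinuousAt.div (by fun_prop) (by fun_prop) (by positivity)).tendsto
    refine le_of_tendsto hcont ?_
    filter_upwards [Ioo_mem_nhdsLT_of_mem (Set.mem_Ioc.mpr ⟨h0, le_refl d⟩)] with t ht
    exact key t ht.1 ht.2
end

section
/- Let α be a probability measure on E, F : E → B a Bochner-integrable map into a separable Banach space, and suppose the I-projection α* of α on C = {ν : ∫F dν ∈ K} has density dα*/dα = e^{⟨λ*,F⟩}/Z_F(λ*) for some λ* ∈ B'. Then for every ε > 0, (1/n)·log(α^{⊗n}(Lₙ ∈ C_ε)·e^{n H(α*|α)}) ≥ (1/n)·log P(‖(1/n)∑_{i=1}^n F(Yᵢ) − ∫F dα*‖ ≤ ε) − ‖λ*‖·ε, where Y₁,…,Yₙ are i.i.d. with law α* and C_ε = {ν : ‖∫F dν − ∫F dα*‖ ≤ ε} ⊆ {ν : d(∫F dν, K) ≤ ε}. -/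
open MeasureTheory Set Filter
open scoped ENNReal

/-- The empirical measure of `n` points. -/
noncomputable def empMeas {E : Type*} [MeasurableSpace E] (n : ℕ) (x : Fin n → E) : Measure E :=
  (n : ℝ≥0∞)⁻¹ • ∑ i, Measure.dirac (x i)

/-! The I-projection is the exponential tilting `α* = α.tilted ⟨λ*, F⟩`, so `α*^{⊗n}` has density
`exp (∑ᵢ ⟨λ*, F xᵢ⟩ - n log Z)` with respect to `α^{⊗n}`. On the event
`‖(1/n) ∑ᵢ F xᵢ - ∫ F dα*‖ ≤ ε` the exponent differs from `n H(α*|α) = n (⟨λ*, ∫ F dα*⟩ - log Z)`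
by at most `n ‖λ*‖ ε`, so the two product measures of that event agree up to a factor
`exp (± n ‖λ*‖ ε)`; taking logarithms gives the bound. -/

open ProbabilityTheory Real

namespace MeasureTheory

section ProductDensity

variable {ι : Type*} [Fintype ι] {Ω : ι → Type*} [∀ i, MeasurableSpace (Ω i)]
  {μ : ∀ i, Measure (Ω i)} [∀ i, IsProbabilityMeasure (μ i)]

theorem lintegral_fintype_prod_eq_prod (f : ∀ i, Ω i → ℝ≥0∞) (hf : ∀ i, Measurable (f i)) :
    ∫⁻ x, ∏ i, f i (x i) ∂Measure.pi μ = ∏ i, ∫⁻ y, f i y ∂μ i := by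
  rw [lintegral_prod_eq_prod_lintegral_of_indepFun _ _
    (iIndepFun_pi fun i => (hf i).aemeasurable) fun i => (hf i).comp (measurable_pi_apply i)]
  exact Finset.prod_congr rfl fun i _ => (measurePreserving_eval μ i).lintegral_comp (hf i)

theorem Measure.pi_withDensity (g : ∀ i, Ω i → ℝ≥0∞) (hg : ∀ i, Measurable (g i))
    [∀ i, SigmaFinite ((μ i).withDensity (g i))] :
    Measure.pi (fun i => (μ i).withDensity (g i))
      = (Measure.pi μ).withDensity fun x => ∏ i, g i (x i) := by
  refine Measure.pi_eq fun s hs => ?_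
  have hindicator : (Set.univ.pi s).indicator (fun x => ∏ i, g i (x i))
      = fun x => ∏ i, (s i).indicator (g i) (x i) := by
    ext x
    classical
    simp only [Set.indicator_apply, Set.mem_univ_pi, Finset.prod_ite_zero, Finset.mem_univ,
      true_implies]
  rw [withDensity_apply _ (MeasurableSet.univ_pi hs), ← lintegral_indicator
    (MeasurableSet.univ_pi hs), hindicator,
    lintegral_fintype_prod_eq_prod _ fun i => (hg i).indicator (hs i)]
  simp_rw [lintegral_indicator (hs _), withDensity_apply _ (hs _)]

end ProductDensity

theorem Measure.pi_tilted {ι Ω : Type*} [Fintype ι] [MeasurableSpace Ω] {μ : Measure Ω}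
    [IsProbabilityMeasure μ] {f : Ω → ℝ} (hf : Measurable f)
    (hexp : Integrable (fun x => exp (f x)) μ) :
    Measure.pi (fun _ : ι => μ.tilted f) = (Measure.pi fun _ => μ).withDensity fun x =>
      ENNReal.ofReal (exp (∑ i, f (x i) - Fintype.card ι * log (∫ y, exp (f y) ∂μ))) := by
  have hZ : 0 < ∫ y, exp (f y) ∂μ := integral_exp_pos hexp
  have := isProbabilityMeasure_tilted hexp
  rw [Measure.tilted, Measure.pi_withDensity _ fun _ => (hf.exp.div_const _).ennreal_ofReal]
  congr 1
  ext x
  rw [← ENNReal.ofReal_prod_of_nonneg fun i _ => by positivity, Finset.prod_div_distrib,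
    ← exp_sum, Finset.prod_const, Finset.card_univ, ← exp_log hZ, ← exp_nat_mul, ← exp_sub,
    log_exp]

section DensityBounds

variable {Ω : Type*} [MeasurableSpace Ω] {μ : Measure Ω} [SFinite μ] {f : Ω → ℝ≥0∞}
  {s : Set Ω} {c : ℝ≥0∞}

theorem withDensity_apply_le_mul (h : ∀ x ∈ s, f x ≤ c) : μ.withDensity f s ≤ c * μ s := by
  rw [withDensity_apply', ← setLIntegral_const]
  exact setLIntegral_mono measurable_const h

theorem mul_le_withDensity_apply (hf : Measurable f) (h : ∀ x ∈ s, c ≤ f x) :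
    c * μ s ≤ μ.withDensity f s := by
  rw [withDensity_apply', ← setLIntegral_const]
  exact setLIntegral_mono hf h

end DensityBounds

end MeasureTheory

theorem ContinuousLinearMap.abs_sum_apply_sub_le {B : Type*} [NormedAddCommGroup B]
    [NormedSpace ℝ B] (l : B →L[ℝ] ℝ) {n : ℕ} (hn : n ≠ 0) (v : Fin n → B) (m : B) :
    |∑ i, l (v i) - n * l m| ≤ n * (‖l‖ * ‖(n : ℝ)⁻¹ • ∑ i, v i - m‖) := by
  have hscale : ∑ i, v i - (n : ℝ) • m = (n : ℝ) • ((n : ℝ)⁻¹ • ∑ i, v i - m) := by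
    rw [smul_sub, smul_inv_smul₀ (Nat.cast_ne_zero.mpr hn)]
  calc |∑ i, l (v i) - n * l m| = ‖l (∑ i, v i - (n : ℝ) • m)‖ := by
        rw [map_sub, map_sum, map_smul, smul_eq_mul, Real.norm_eq_abs]
    _ ≤ ‖l‖ * ‖∑ i, v i - (n : ℝ) • m‖ := l.le_opNorm _
    _ = n * (‖l‖ * ‖(n : ℝ)⁻¹ • ∑ i, v i - m‖) := by
        rw [hscale, norm_smul, Real.norm_natCast]
        ring

theorem log_toReal_le_log_toReal_mul_exp_add {p q : ℝ≥0∞} (hp : p ≠ ∞) {c d : ℝ} (hd : 0 ≤ d)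
    (hlow : ENNReal.ofReal (exp (c - d)) * p ≤ q) (hup : q ≤ ENNReal.ofReal (exp (c + d)) * p) :
    log q.toReal ≤ log (p.toReal * exp c) + d := by
  have hq : q ≠ ∞ := ne_top_of_le_ne_top (ENNReal.mul_ne_top ENNReal.ofReal_ne_top hp) hup
  have hlow' := ENNReal.toReal_mono hq hlow
  have hup' := ENNReal.toReal_mono (ENNReal.mul_ne_top ENNReal.ofReal_ne_top hp) hup
  rw [ENNReal.toReal_mul, ENNReal.toReal_ofReal (exp_pos _).le] at hlow' hup'
  rcases (ENNReal.toReal_nonneg : 0 ≤ p.toReal).eq_or_lt with hp0 | hp0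
  · rw [← hp0, mul_zero] at hup'
    rw [le_antisymm hup' ENNReal.toReal_nonneg, ← hp0, zero_mul, log_zero]
    linarith
  · have hq0 : 0 < q.toReal := lt_of_lt_of_le (by positivity) hlow'
    calc log q.toReal ≤ log (exp (c + d) * p.toReal) := log_le_log hq0 hup'
      _ = log (p.toReal * exp c) + d := by
        rw [log_mul (exp_pos _).ne' hp0.ne', log_mul hp0.ne' (exp_pos _).ne', log_exp, log_exp]
        ring

theorem centering_lower_bound_general {E B : Type*} [MeasurableSpace E]
    [NormedAddCommGroup B] [NormedSpace ℝ B] [MeasurableSpace B] [BorelSpace B]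
    (α : Measure E) [IsProbabilityMeasure α]
    (F : E → B) (hF : Measurable F)
    (l : B →L[ℝ] ℝ)
    (hint : Integrable (fun x => Real.exp (l (F x))) α)
    (αstar : Measure E)
    (hstar : αstar = α.withDensity fun x =>
      ENNReal.ofReal (Real.exp (l (F x)) / ∫ y, Real.exp (l (F y)) ∂α))
    (ε : ℝ) (hε : 0 < ε) (n : ℕ) (hn : 0 < n) :
    (1 / n : ℝ) * Real.log
        (((Measure.pi fun _ : Fin n => α)
            {x | ‖(n : ℝ)⁻¹ • ∑ i, F (x i) - ∫ y, F y ∂αstar‖ ≤ ε}).toReal *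
          Real.exp (n * (l (∫ y, F y ∂αstar) - Real.log (∫ y, Real.exp (l (F y)) ∂α)))) ≥
      (1 / n : ℝ) * Real.log
        (((Measure.pi fun _ : Fin n => αstar)
            {x | ‖(n : ℝ)⁻¹ • ∑ i, F (x i) - ∫ y, F y ∂αstar‖ ≤ ε}).toReal) -
        ‖l‖ * ε := by
  set m := ∫ y, F y ∂αstar
  set A := {x : Fin n → E | ‖(n : ℝ)⁻¹ • ∑ i, F (x i) - m‖ ≤ ε}
  set c := (n : ℝ) * (l m - log (∫ y, exp (l (F y)) ∂α))
  have hpi : Measure.pi (fun _ : Fin n => αstar) = (Measure.pi fun _ => α).withDensity fun x =>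
      ENNReal.ofReal (exp (∑ i, l (F (x i)) - n * log (∫ y, exp (l (F y)) ∂α))) := by
    have := Measure.pi_tilted (ι := Fin n) (f := fun x => l (F x)) (l.measurable.comp hF) hint
    rwa [Fintype.card_fin, Measure.tilted, ← hstar] at this
  have hcentered : ∀ x ∈ A, |∑ i, l (F (x i)) - n * l m| ≤ n * (‖l‖ * ε) := fun x hx =>
    (l.abs_sum_apply_sub_le hn.ne' _ m).trans (by gcongr; exact hx)
  set δ := ‖l‖ * ε
  have hlog : log ((Measure.pi fun _ : Fin n => αstar) A).toReal
      ≤ log (((Measure.pi fun _ : Fin n => α) A).toReal * exp c) + n * δ :=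
    log_toReal_le_log_toReal_mul_exp_add (measure_ne_top _ A) (by positivity)
      (hpi ▸ mul_le_withDensity_apply (by fun_prop) fun x hx =>
        ENNReal.ofReal_le_ofReal <| exp_le_exp.mpr <| by linarith [(abs_le.mp (hcentered x hx)).1])
      (hpi ▸ withDensity_apply_le_mul fun x hx =>
        ENNReal.ofReal_le_ofReal <| exp_le_exp.mpr <| by linarith [(abs_le.mp (hcentered x hx)).2])
  calc (1 / n : ℝ) * log ((Measure.pi fun _ : Fin n => αstar) A).toReal - δ
      ≤ (1 / n : ℝ) * (log (((Measure.pi fun _ : Fin n => α) A).toReal * exp c) + n * δ) - δ := by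
        gcongr
    _ = (1 / n : ℝ) * log (((Measure.pi fun _ : Fin n => α) A).toReal * exp c) := by
        field_simp
        ring

/-- Lemma 3.1: centering lower bound for moment constraints. If the I-projection `α*` of `α`
on `C = {ν : ∫F dν ∈ K}` has the exponential form `dα*/dα = e^{⟨λ*,F⟩}/Z_F(λ*)`, then for all
`ε > 0`, `(1/n) log(α^{⊗n}(Lₙ ∈ C_ε) e^{n H(α*|α)})` is at least
`(1/n) log P(‖(1/n)∑F(Yᵢ) - ∫F dα*‖ ≤ ε) - ‖λ*‖ ε` where the `Yᵢ` are i.i.d. with law `α*`,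
with `H(α*|α) = ⟨λ*, ∫F dα*⟩ - log Z_F(λ*)` and
`C_ε ⊇ {ν : ‖∫F dν - ∫F dα*‖ ≤ ε}` being the event that the empirical `F`-mean is `ε`-close
to `K` (the empirical measure `Lₙ` satisfies `∫F dLₙ = (1/n)∑F(xᵢ)`). -/
theorem centering_lower_bound {E B : Type*} [MeasurableSpace E] [TopologicalSpace E]
    [PolishSpace E] [BorelSpace E]
    [NormedAddCommGroup B] [NormedSpace ℝ B] [MeasurableSpace B] [BorelSpace B]
    [SecondCountableTopology B]
    (α : Measure E) [IsProbabilityMeasure α]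
    (F : E → B) (hF : Measurable F)
    (K : Set B) (hKclosed : IsClosed K) (hKconv : Convex ℝ K)
    (l : B →L[ℝ] ℝ)
    (hint : Integrable (fun x => Real.exp (l (F x))) α)
    (αstar : Measure E)
    (hstar : αstar = α.withDensity fun x =>
      ENNReal.ofReal (Real.exp (l (F x)) / ∫ y, Real.exp (l (F y)) ∂α))
    (hFint : Integrable F αstar)
    (hmem : (∫ x, F x ∂αstar) ∈ K)
    (ε : ℝ) (hε : 0 < ε) (n : ℕ) (hn : 0 < n) :
    (1 / n : ℝ) * Real.log
        (((Measure.pi fun _ : Fin n => α)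
            {x | ‖(n : ℝ)⁻¹ • ∑ i, F (x i) - ∫ y, F y ∂αstar‖ ≤ ε}).toReal *
          Real.exp (n * (l (∫ y, F y ∂αstar) - Real.log (∫ y, Real.exp (l (F y)) ∂α)))) ≥
      (1 / n : ℝ) * Real.log
        (((Measure.pi fun _ : Fin n => αstar)
            {x | ‖(n : ℝ)⁻¹ • ∑ i, F (x i) - ∫ y, F y ∂αstar‖ ≤ ε}).toReal) -
        ‖l‖ * ε :=
  centering_lower_bound_general α F hF l hint αstar hstar ε hε n hn
end

section
/- Let (E,d) be a compact metric space with covering numbers N(d,ε). There exists a sequence εₙ → 0 of positive reals such that n·εₙ²/8 + (log εₙ)·N(d, εₙ/8) → +∞ as n → ∞. -/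
open Filter Set
open scoped ENNReal

/-- The covering number of `s` by open `ρ`-balls of radius `ε` (value `∞` if no finite
cover exists). -/
noncomputable def coverNum {X : Type*} (ρ : X → X → ℝ) (s : Set X) (ε : ℝ) : ℝ≥0∞ :=
  sInf {c : ℝ≥0∞ | ∃ t : Finset X, (t.card : ℝ≥0∞) = c ∧ s ⊆ ⋃ x ∈ t, {y | ρ x y < ε}}

/-- Proposition 4.6.3: on a compact metric space there is a sequence `εₙ → 0`, `εₙ > 0`, with
`n εₙ²/8 + (log εₙ) N(d, εₙ/8) → +∞`. -/
theorem exists_enlargement_sequence {E : Type*} [MetricSpace E] [CompactSpace E] :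
    ∃ ε : ℕ → ℝ, (∀ n, 0 < ε n) ∧ Tendsto ε atTop (nhds 0) ∧
      Tendsto (fun n : ℕ => (n : ℝ) * (ε n) ^ 2 / 8 +
        Real.log (ε n) * (coverNum dist (Set.univ : Set E) (ε n / 8)).toReal)
        atTop atTop := by
  classical
  set f : ℝ → ℝ := fun e =>
    Real.log e * (coverNum dist (Set.univ : Set E) (e / 8)).toReal with hf
  -- for each k, the function n ↦ n (1/(k+1))²/8 + f(1/(k+1)) tends to ∞
  have hlim : ∀ k : ℕ, Tendsto
      (fun n : ℕ => (n : ℝ) * (1 / ((k : ℝ) + 1)) ^ 2 / 8 + f (1 / ((k : ℝ) + 1)))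
      atTop atTop := by
    intro k
    apply tendsto_atTop_add_const_right
    apply Tendsto.atTop_div_const (by norm_num : (0:ℝ) < 8)
    exact tendsto_natCast_atTop_atTop.atTop_mul_const (by positivity)
  have hM : ∀ k : ℕ, ∃ m : ℕ, ∀ n ≥ m,
      (k : ℝ) ≤ (n : ℝ) * (1 / ((k : ℝ) + 1)) ^ 2 / 8 + f (1 / ((k : ℝ) + 1)) := by
    intro k
    exact eventually_atTop.mp ((hlim k).eventually_ge_atTop (k : ℝ))
  choose M hM' using hM
  set N : ℕ → ℕ := fun k => (Finset.range (k + 1)).sup M + k with hN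
  have hkN : ∀ k, k ≤ N k := fun k => Nat.le_add_left k _
  have hMN : ∀ k, M k ≤ N k :=
    fun k => le_trans (Finset.le_sup (Finset.self_mem_range_succ k)) (Nat.le_add_right _ _)
  set K : ℕ → ℕ := fun n => Nat.findGreatest (fun k => N k ≤ n) n with hK
  have hKge : ∀ k n, N k ≤ n → k ≤ K n := by
    intro k n h
    exact Nat.le_findGreatest (le_trans (hkN k) h) h
  have hKtop : Tendsto K atTop atTop := by
    rw [tendsto_atTop_atTop]
    exact fun b => ⟨N b, fun n hn => hKge b n hn⟩
  refine ⟨fun n => 1 / ((K n : ℝ) + 1), fun n => by positivity, ?_, ?_⟩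
  · have h1 : Tendsto (fun n => ((K n : ℝ) + 1)) atTop atTop :=
      tendsto_atTop_add_const_right _ 1 (tendsto_natCast_atTop_atTop.comp hKtop)
    simpa [one_div, Pi.inv_def] using h1.inv_tendsto_atTop
  · rw [tendsto_atTop]
    intro C
    rw [eventually_atTop]
    refine ⟨N ⌈C⌉₊, fun n hn => ?_⟩
    have h1 : ⌈C⌉₊ ≤ K n := hKge _ n hn
    have h2 : N (K n) ≤ n := by
      have : (fun k => N k ≤ n) (K n) :=
        Nat.findGreatest_spec (P := fun k => N k ≤ n) (m := ⌈C⌉₊) (le_trans (hkN ⌈C⌉₊) hn) hn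
      exact this
    have h3 : M (K n) ≤ n := le_trans (hMN _) h2
    have h4 := hM' (K n) n h3
    calc C ≤ (⌈C⌉₊ : ℝ) := Nat.le_ceil C
      _ ≤ (K n : ℝ) := by exact_mod_cast h1
      _ ≤ _ := h4
end

section
/- Let α be a probability measure, p > 1, q = p/(p−1), and ν₂ a probability with density dν₂/dα ∈ L^p(α). Then for any probability ν₁ with H(ν₁|ν₂) < ∞, the dual Orlicz norm satisfies ‖ν₁ − ν₂‖*_τ ≤ qC·(1 + log(4^{1/q}·‖dν₂/dα‖_p))·(H(ν₁|ν₂) + √H(ν₁|ν₂)), where C is the universal constant in the Bolley–Villani weighted Pinsker inequality ‖fν₁ − fν₂‖_TV ≤ (C/δ)(1 + log∫e^{δf}dν₂)(H(ν₁|ν₂)+√H(ν₁|ν₂)) for nonnegative f and δ>0. -/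
open MeasureTheory Set
open scoped ENNReal

/-- The Orlicz function `τ(u) = e^{|u|} - |u| - 1`. -/
noncomputable def tau (u : ℝ) : ℝ := Real.exp |u| - |u| - 1

/-- The Luxemburg norm of `g` in the Orlicz space `L_τ(α)`. -/
noncomputable def luxNorm {E : Type*} [MeasurableSpace E] (α : Measure E) (g : E → ℝ) : ℝ :=
  sInf {s | 0 < s ∧ (∫ x, tau (g x / s) ∂α) ≤ 1}

/-- The dual Orlicz norm of the difference `ν₁ - ν₂`:
`sup {∫ f dν₁ - ∫ f dν₂ : ‖f‖_τ ≤ 1}`. -/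
noncomputable def dualOrliczNorm {E : Type*} [MeasurableSpace E] (α : Measure E)
    (ν₁ ν₂ : Measure E) : ℝ :=
  sSup {r | ∃ f : E → ℝ, Measurable f ∧ luxNorm α f ≤ 1 ∧
    r = (∫ x, f x ∂ν₁) - ∫ x, f x ∂ν₂}

/-- The weighted total variation `‖fν₁ - fν₂‖_TV`, via the Hahn-type supremum over
measurable sets. -/
noncomputable def weightedTV {E : Type*} [MeasurableSpace E] (f : E → ℝ)
    (ν₁ ν₂ : Measure E) : ℝ :=
  sSup {r | ∃ s : Set E, MeasurableSet s ∧
    r = ((∫ x in s, f x ∂ν₁) - ∫ x in s, f x ∂ν₂) -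
      ((∫ x in sᶜ, f x ∂ν₁) - ∫ x in sᶜ, f x ∂ν₂)}

/-! ### Auxiliary pointwise lemmas -/

section Pointwise

lemma tau_nonneg' (u : ℝ) : 0 ≤ tau u := by
  have := Real.add_one_le_exp |u|; unfold tau; linarith

lemma exp_abs_le_two_tau' (u : ℝ) : Real.exp |u| ≤ 2 * tau u + 2 := by
  unfold tau
  have h1 := Real.add_one_le_exp (|u| / 2)
  have h2 : Real.exp |u| = Real.exp (|u|/2) * Real.exp (|u|/2) := by
    rw [← Real.exp_add]; ring_nf
  nlinarith [abs_nonneg u, sq_nonneg (1 - |u|/2)]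

lemma tau_mono' {u v : ℝ} (h : |u| ≤ |v|) : tau u ≤ tau v := by
  unfold tau
  have h1 := Real.add_one_le_exp (|v| - |u|)
  have h2 : Real.exp |v| = Real.exp |u| * Real.exp (|v| - |u|) := by
    rw [← Real.exp_add]; ring_nf
  nlinarith [Real.one_le_exp (abs_nonneg u), Real.exp_pos |u|]

lemma young_exp' (a b : ℝ) (hb : 0 ≤ b) : a * b ≤ Real.exp a + (b * Real.log b - b + 1) := by
  rcases eq_or_lt_of_le hb with h | h
  · simp [← h]; positivity
  · have h1 := Real.add_one_le_exp (a - Real.log b)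
    rw [Real.exp_sub, Real.exp_log h] at h1
    have h2 : (a - Real.log b + 1) * b ≤ Real.exp a := by
      rw [le_div_iff₀ h] at h1; linarith [h1]
    nlinarith

lemma phi_nonneg' {b : ℝ} (hb : 0 ≤ b) : 0 ≤ b * Real.log b - b + 1 := by
  rcases eq_or_lt_of_le hb with h | h
  · simp [← h]
  · have h1 := Real.log_le_sub_one_of_pos (show (0:ℝ) < b⁻¹ by positivity)
    rw [Real.log_inv] at h1
    have : -Real.log b ≤ b⁻¹ - 1 := h1
    have h2 : b * (-Real.log b) ≤ b * (b⁻¹ - 1) :=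
      mul_le_mul_of_nonneg_left this hb
    rw [mul_sub, mul_inv_cancel₀ (ne_of_gt h)] at h2
    nlinarith

lemma phi_le' {b : ℝ} (hb : 0 ≤ b) : b * Real.log b - b + 1 ≤ b * |Real.log b| + 1 := by
  have : b * Real.log b ≤ b * |Real.log b| :=
    mul_le_mul_of_nonneg_left (le_abs_self _) hb
  linarith

lemma tau_continuous : Continuous tau :=
  ((Real.continuous_exp.comp continuous_abs).sub continuous_abs).sub continuous_const

lemma tau_zero : tau 0 = 0 := by simp [tau]

lemma tau_measurable : Measurable tau := tau_continuous.measurable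

end Pointwise

/-! ### Nonnegativity of relative entropy -/

lemma integral_llr_nonneg' {E : Type*} [MeasurableSpace E] (ν₁ ν₂ : Measure E)
    [IsProbabilityMeasure ν₁] [IsProbabilityMeasure ν₂] (hac : ν₁ ≪ ν₂)
    (hH : Integrable (MeasureTheory.llr ν₁ ν₂) ν₁) : 0 ≤ ∫ x, llr ν₁ ν₂ x ∂ν₁ := by
  set ρ := fun x => (ν₁.rnDeriv ν₂ x).toReal with hρdef
  have hmain : ∫ x, llr ν₁ ν₂ x ∂ν₁ = ∫ x, ρ x * Real.log (ρ x) ∂ν₂ := by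
    rw [← MeasureTheory.integral_rnDeriv_smul hac (f := llr ν₁ ν₂)]
    simp [MeasureTheory.llr, smul_eq_mul, hρdef]
  have hint : Integrable (fun x => ρ x * Real.log (ρ x)) ν₂ := by
    have := (MeasureTheory.integrable_rnDeriv_smul_iff hac (f := llr ν₁ ν₂)).mpr hH
    simpa [MeasureTheory.llr, smul_eq_mul, hρdef] using this
  have hρint : Integrable ρ ν₂ := Measure.integrable_toReal_rnDeriv
  have hρ1 : ∫ x, ρ x ∂ν₂ = 1 := by
    rw [hρdef, Measure.integral_toReal_rnDeriv hac]; simp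
  have h0 : 0 ≤ ∫ x, (ρ x * Real.log (ρ x) - ρ x + 1) ∂ν₂ :=
    integral_nonneg (fun x => phi_nonneg' (ENNReal.toReal_nonneg))
  have hsub : Integrable (fun x => ρ x * Real.log (ρ x) - ρ x) ν₂ := hint.sub hρint
  have heq : ∫ x, (ρ x * Real.log (ρ x) - ρ x + 1) ∂ν₂
      = ∫ x, ρ x * Real.log (ρ x) ∂ν₂ - 1 + 1 := by
    rw [integral_add hsub (integrable_const 1), integral_sub hint hρint, hρ1]
    simp
  rw [hmain]; linarith [h0, heq ▸ h0]

/-! ### Lp norm of the density is at least one -/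

section Lp
variable {E : Type*} [MeasurableSpace E] (α ν₂ : Measure E)
  [IsProbabilityMeasure α] [IsProbabilityMeasure ν₂]

lemma lp_ge_one (hν₂ : ν₂ ≪ α) {p q : ℝ} (hpq : p.HolderConjugate q) :
    1 ≤ ∫⁻ x, (ν₂.rnDeriv α x) ^ p ∂α := by
  have h1 : ∫⁻ x, ν₂.rnDeriv α x ∂α = 1 := by
    rw [Measure.lintegral_rnDeriv hν₂]; simp
  have hold := ENNReal.lintegral_mul_le_Lp_mul_Lq α hpq
    (Measure.measurable_rnDeriv ν₂ α).aemeasurable (g := fun _ => 1) aemeasurable_const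
  simp only [Pi.mul_apply, mul_one, ENNReal.one_rpow, lintegral_one, measure_univ, h1] at hold
  calc (1:ℝ≥0∞) = (1:ℝ≥0∞) ^ p := by rw [ENNReal.one_rpow]
    _ ≤ ((∫⁻ x, ν₂.rnDeriv α x ^ p ∂α) ^ (1/p)) ^ p := ENNReal.rpow_le_rpow hold hpq.pos.le
    _ = ∫⁻ x, ν₂.rnDeriv α x ^ p ∂α := by
        rw [← ENNReal.rpow_mul, one_div, inv_mul_cancel₀ hpq.ne_zero, ENNReal.rpow_one]

lemma lp_eq (hν₂ : ν₂ ≪ α) {p : ℝ} (hp : 0 < p)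
    (hLp : Integrable (fun x => ((ν₂.rnDeriv α x).toReal) ^ p) α) :
    ENNReal.ofReal (∫ x, ((ν₂.rnDeriv α x).toReal) ^ p ∂α) = ∫⁻ x, (ν₂.rnDeriv α x) ^ p ∂α := by
  have hnn : 0 ≤ᵐ[α] fun x => (ν₂.rnDeriv α x).toReal ^ p :=
    Filter.Eventually.of_forall fun x => Real.rpow_nonneg ENNReal.toReal_nonneg p
  have haeeq : (fun x => ENNReal.ofReal ((ν₂.rnDeriv α x).toReal ^ p))
      =ᵐ[α] fun x => ν₂.rnDeriv α x ^ p := by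
    filter_upwards [Measure.rnDeriv_lt_top ν₂ α] with x hx
    rw [← ENNReal.ofReal_rpow_of_nonneg ENNReal.toReal_nonneg hp.le,
      ENNReal.ofReal_toReal hx.ne]
  rw [MeasureTheory.integral_eq_lintegral_of_nonneg_ae hnn hLp.aestronglyMeasurable,
    lintegral_congr_ae haeeq, ENNReal.ofReal_toReal]
  rw [← lintegral_congr_ae haeeq]
  exact ((hasFiniteIntegral_iff_ofReal hnn).mp hLp.hasFiniteIntegral).ne

end Lp

/-! ### Hölder: exponential moment under `ν₂` -/

section Hoelder
variable {E : Type*} [MeasurableSpace E] {α ν₁ ν₂ : Measure E} [IsProbabilityMeasure α]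
  [IsProbabilityMeasure ν₂]

lemma exp_moment (hν₂ : ν₂ ≪ α) {p q : ℝ} (hpq : p.HolderConjugate q)
    {f : E → ℝ} (hfm : Measurable f)
    (hK : ∫⁻ x, ENNReal.ofReal (Real.exp |f x|) ∂α ≤ 4) :
    ∫⁻ x, ENNReal.ofReal (Real.exp ((1/q) * |f x|)) ∂ν₂ ≤
      (4:ℝ≥0∞) ^ (1/q) * (∫⁻ x, (ν₂.rnDeriv α x) ^ p ∂α) ^ (1/p) := by
  have hgm : Measurable fun x => ENNReal.ofReal (Real.exp ((1/q) * |f x|)) :=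
    (Real.measurable_exp.comp ((hfm.abs).const_mul (1/q))).ennreal_ofReal
  have h1 : ∫⁻ x, ENNReal.ofReal (Real.exp ((1/q) * |f x|)) ∂ν₂
      = ∫⁻ x, ν₂.rnDeriv α x * ENNReal.ofReal (Real.exp ((1/q) * |f x|)) ∂α :=
    (MeasureTheory.lintegral_rnDeriv_mul hν₂ hgm.aemeasurable).symm
  have hold := ENNReal.lintegral_mul_le_Lp_mul_Lq α hpq
    (Measure.measurable_rnDeriv ν₂ α).aemeasurable hgm.aemeasurable
  have h2 : ∀ x, (ENNReal.ofReal (Real.exp ((1/q) * |f x|))) ^ q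
      = ENNReal.ofReal (Real.exp |f x|) := by
    intro x
    rw [ENNReal.ofReal_rpow_of_pos (Real.exp_pos ((1/q) * |f x|))]
    congr 1
    rw [← Real.exp_one_rpow ((1/q) * |f x|), ← Real.rpow_mul (Real.exp_pos 1).le,
      mul_comm (1/q) |f x|, mul_assoc, one_div, inv_mul_cancel₀ hpq.symm.ne_zero, mul_one,
      Real.exp_one_rpow]
  simp only [Pi.mul_apply, h2] at hold
  calc ∫⁻ x, ENNReal.ofReal (Real.exp ((1/q) * |f x|)) ∂ν₂
      = ∫⁻ x, ν₂.rnDeriv α x * ENNReal.ofReal (Real.exp ((1/q) * |f x|)) ∂α := h1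
    _ ≤ (∫⁻ x, (ν₂.rnDeriv α x) ^ p ∂α) ^ (1/p)
        * (∫⁻ x, ENNReal.ofReal (Real.exp |f x|) ∂α) ^ (1/q) := hold
    _ ≤ (∫⁻ x, (ν₂.rnDeriv α x) ^ p ∂α) ^ (1/p) * (4:ℝ≥0∞) ^ (1/q) :=
        mul_le_mul_right
          (ENNReal.rpow_le_rpow hK (one_div_nonneg.mpr hpq.symm.pos.le)) _
    _ = (4:ℝ≥0∞) ^ (1/q) * (∫⁻ x, (ν₂.rnDeriv α x) ^ p ∂α) ^ (1/p) := mul_comm _ _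

end Hoelder

/-! ### Integrability lemmas -/

section Integrability
variable {E : Type*} [MeasurableSpace E] {ν₁ ν₂ : Measure E} [IsProbabilityMeasure ν₁]
  [IsProbabilityMeasure ν₂]

lemma integrable_of_expmoment {g : E → ℝ} (hgm : Measurable g) {δ : ℝ} (hδ : 0 < δ)
    (hfin : ∫⁻ x, ENNReal.ofReal (Real.exp (δ * |g x|)) ∂ν₂ ≠ ⊤) :
    Integrable g ν₂ := by
  have hexp : Integrable (fun x => Real.exp (δ * |g x|)) ν₂ := by
    refine ⟨(Real.measurable_exp.comp ((hgm.abs).const_mul δ)).aestronglyMeasurable, ?_⟩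
    rw [hasFiniteIntegral_iff_ofReal (Filter.Eventually.of_forall fun x => (Real.exp_pos _).le)]
    exact hfin.lt_top
  refine (hexp.const_mul (1/δ)).mono' hgm.aestronglyMeasurable
    (Filter.Eventually.of_forall fun x => ?_)
  have h1 : δ * |g x| ≤ Real.exp (δ * |g x|) := by
    have := Real.add_one_le_exp (δ * |g x|); linarith
  have h2 : |g x| = (1/δ) * (δ * |g x|) := by field_simp
  calc ‖g x‖ = |g x| := rfl
    _ = (1/δ) * (δ * |g x|) := h2
    _ ≤ (1/δ) * Real.exp (δ * |g x|) := mul_le_mul_of_nonneg_left h1 (by positivity)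

lemma integrable_left {f : E → ℝ} (hfm : Measurable f) (hac : ν₁ ≪ ν₂)
    (hH : Integrable (MeasureTheory.llr ν₁ ν₂) ν₁) {δ : ℝ} (hδ : 0 < δ)
    (hfin : ∫⁻ x, ENNReal.ofReal (Real.exp (δ * |f x|)) ∂ν₂ ≠ ⊤) :
    Integrable f ν₁ := by
  have hmg : Measurable fun x => ENNReal.ofReal (δ * |f x|) :=
    ((hfm.abs).const_mul δ).ennreal_ofReal
  have hml : Measurable fun x => ν₁.rnDeriv ν₂ x
      * ENNReal.ofReal |Real.log (ν₁.rnDeriv ν₂ x).toReal| :=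
    (Measure.measurable_rnDeriv ν₁ ν₂).mul
      ((measurable_llr ν₁ ν₂).abs.ennreal_ofReal)
  have hstep : ∀ᵐ x ∂ν₂, ν₁.rnDeriv ν₂ x * ENNReal.ofReal (δ * |f x|)
      ≤ ENNReal.ofReal (Real.exp (δ * |f x|)) +
        (ν₁.rnDeriv ν₂ x * ENNReal.ofReal |Real.log (ν₁.rnDeriv ν₂ x).toReal| + 1) := by
    filter_upwards [Measure.rnDeriv_lt_top ν₁ ν₂] with x hx
    set b := (ν₁.rnDeriv ν₂ x).toReal with hbdef
    have hb : 0 ≤ b := ENNReal.toReal_nonneg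
    have hρ : ν₁.rnDeriv ν₂ x = ENNReal.ofReal b := (ENNReal.ofReal_toReal hx.ne).symm
    rw [hρ, ← ENNReal.ofReal_mul hb, ← ENNReal.ofReal_mul hb]
    calc ENNReal.ofReal (b * (δ * |f x|))
        ≤ ENNReal.ofReal (Real.exp (δ * |f x|) + (b * Real.log b - b + 1)) := by
          apply ENNReal.ofReal_le_ofReal
          have := young_exp' (δ * |f x|) b hb; linarith
      _ ≤ ENNReal.ofReal (Real.exp (δ * |f x|) + (b * |Real.log b| + 1)) := by
          apply ENNReal.ofReal_le_ofReal
          have := phi_le' hb; linarith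
      _ = ENNReal.ofReal (Real.exp (δ * |f x|)) + (ENNReal.ofReal (b * |Real.log b|) + 1) := by
          rw [ENNReal.ofReal_add (Real.exp_pos _).le (by positivity),
            ENNReal.ofReal_add (mul_nonneg hb (abs_nonneg _)) zero_le_one, ENNReal.ofReal_one]
  have hb1 : ∫⁻ x, ν₁.rnDeriv ν₂ x * ENNReal.ofReal |Real.log (ν₁.rnDeriv ν₂ x).toReal| ∂ν₂
      = ∫⁻ x, ENNReal.ofReal |MeasureTheory.llr ν₁ ν₂ x| ∂ν₁ :=
    MeasureTheory.lintegral_rnDeriv_mul hac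
      ((measurable_llr ν₁ ν₂).abs.ennreal_ofReal).aemeasurable
  have hllr : ∫⁻ x, ENNReal.ofReal |MeasureTheory.llr ν₁ ν₂ x| ∂ν₁ < ⊤ := by
    have := hH.hasFiniteIntegral
    rw [HasFiniteIntegral] at this
    simpa [Real.enorm_eq_ofReal_abs] using this
  have key : ∫⁻ x, ENNReal.ofReal (δ * |f x|) ∂ν₁ ≠ ⊤ := by
    rw [← MeasureTheory.lintegral_rnDeriv_mul hac hmg.aemeasurable]
    have hcalc : ∫⁻ x, ν₁.rnDeriv ν₂ x * ENNReal.ofReal (δ * |f x|) ∂ν₂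
        ≤ ∫⁻ x, (ENNReal.ofReal (Real.exp (δ * |f x|)) +
          (ν₁.rnDeriv ν₂ x * ENNReal.ofReal |Real.log (ν₁.rnDeriv ν₂ x).toReal| + 1)) ∂ν₂ :=
      lintegral_mono_ae hstep
    have hsplit : ∫⁻ x, (ENNReal.ofReal (Real.exp (δ * |f x|)) +
          (ν₁.rnDeriv ν₂ x * ENNReal.ofReal |Real.log (ν₁.rnDeriv ν₂ x).toReal| + 1)) ∂ν₂
        = (∫⁻ x, ENNReal.ofReal (Real.exp (δ * |f x|)) ∂ν₂) +
          ((∫⁻ x, ν₁.rnDeriv ν₂ x * ENNReal.ofReal |Real.log (ν₁.rnDeriv ν₂ x).toReal| ∂ν₂)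
            + 1) := by
      rw [lintegral_add_left ((hfm.abs.const_mul δ).exp).ennreal_ofReal,
        lintegral_add_left hml, lintegral_one, measure_univ]
    refine ((hcalc.trans_eq hsplit).trans_lt ?_).ne
    rw [hb1]
    exact ENNReal.add_lt_top.mpr ⟨hfin.lt_top,
      ENNReal.add_lt_top.mpr ⟨hllr, ENNReal.one_lt_top⟩⟩
  have habs : Integrable (fun x => |f x|) ν₁ := by
    refine ⟨hfm.abs.aestronglyMeasurable, ?_⟩
    rw [hasFiniteIntegral_iff_ofReal (Filter.Eventually.of_forall fun x => abs_nonneg _)]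
    have heq : ∀ x, ENNReal.ofReal |f x| = ENNReal.ofReal δ⁻¹ * ENNReal.ofReal (δ * |f x|) := by
      intro x
      rw [← ENNReal.ofReal_mul (by positivity)]
      congr 1; field_simp
    simp_rw [heq]
    rw [lintegral_const_mul _ hmg]
    exact ENNReal.mul_lt_top ENNReal.ofReal_lt_top key.lt_top
  exact (integrable_norm_iff hfm.aestronglyMeasurable).mp habs

end Integrability

/-! ### Lower bound for the weighted TV distance -/

section TV
variable {E : Type*} [MeasurableSpace E] {ν₁ ν₂ : Measure E}

lemma le_weightedTV {f : E → ℝ} (hfm : Measurable f) (hf1 : Integrable f ν₁)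
    (hf2 : Integrable f ν₂) :
    (∫ x, f x ∂ν₁) - ∫ x, f x ∂ν₂ ≤ weightedTV (fun x => |f x|) ν₁ ν₂ := by
  have hg1 : Integrable (fun x => |f x|) ν₁ := hf1.abs
  have hg2 : Integrable (fun x => |f x|) ν₂ := hf2.abs
  set s₀ : Set E := {x | 0 ≤ f x} with hs₀def
  have hs₀ : MeasurableSet s₀ := measurableSet_le measurable_const hfm
  have e1 : ∫ x in s₀, |f x| ∂ν₁ = ∫ x in s₀, f x ∂ν₁ :=
    setIntegral_congr_fun hs₀ fun x hx => abs_of_nonneg hx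
  have e2 : ∫ x in s₀, |f x| ∂ν₂ = ∫ x in s₀, f x ∂ν₂ :=
    setIntegral_congr_fun hs₀ fun x hx => abs_of_nonneg hx
  have e3 : ∫ x in s₀ᶜ, |f x| ∂ν₁ = -∫ x in s₀ᶜ, f x ∂ν₁ := by
    rw [← integral_neg]
    exact setIntegral_congr_fun hs₀.compl fun x hx => abs_of_neg (not_le.mp hx)
  have e4 : ∫ x in s₀ᶜ, |f x| ∂ν₂ = -∫ x in s₀ᶜ, f x ∂ν₂ := by
    rw [← integral_neg]
    exact setIntegral_congr_fun hs₀.compl fun x hx => abs_of_neg (not_le.mp hx)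
  have key : (∫ x, f x ∂ν₁) - ∫ x, f x ∂ν₂
      = ((∫ x in s₀, |f x| ∂ν₁) - ∫ x in s₀, |f x| ∂ν₂) -
        ((∫ x in s₀ᶜ, |f x| ∂ν₁) - ∫ x in s₀ᶜ, |f x| ∂ν₂) := by
    rw [e1, e2, e3, e4, ← integral_add_compl hs₀ hf1, ← integral_add_compl hs₀ hf2]
    ring
  apply le_csSup
  · refine ⟨(∫ x, |f x| ∂ν₁) + ∫ x, |f x| ∂ν₂, ?_⟩
    rintro r ⟨s, hs, rfl⟩
    have b1 : ∫ x in s, |f x| ∂ν₁ ≤ ∫ x, |f x| ∂ν₁ :=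
      setIntegral_le_integral hg1 (Filter.Eventually.of_forall fun x => abs_nonneg _)
    have b2 : ∫ x in sᶜ, |f x| ∂ν₂ ≤ ∫ x, |f x| ∂ν₂ :=
      setIntegral_le_integral hg2 (Filter.Eventually.of_forall fun x => abs_nonneg _)
    have b3 : 0 ≤ ∫ x in s, |f x| ∂ν₂ := setIntegral_nonneg hs fun x _ => abs_nonneg _
    have b4 : 0 ≤ ∫ x in sᶜ, |f x| ∂ν₁ := setIntegral_nonneg hs.compl fun x _ => abs_nonneg _
    linarith
  · exact ⟨s₀, hs₀, key⟩

end TV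

/-! ### From the Luxemburg norm bound to an exponential integral bound -/

section Lux
open Filter
variable {E : Type*} [MeasurableSpace E] {α : Measure E} [IsProbabilityMeasure α]

lemma lux_exp_bound {f : E → ℝ} (hfm : Measurable f)
    (hlux : luxNorm α f ≤ 1)
    (hall : ∀ s : ℝ, 0 < s → Integrable (fun x => tau (f x / s)) α) :
    ∫⁻ x, ENNReal.ofReal (Real.exp |f x|) ∂α ≤ 4 := by
  set S := {s | 0 < s ∧ (∫ x, tau (f x / s) ∂α) ≤ 1} with hSdef
  have hlux' : sInf S ≤ 1 := hlux
  have hSne : S.Nonempty := by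
    have hdom : Tendsto (fun n : ℕ => ∫ x, tau (f x / ((n:ℝ)+1)) ∂α) atTop
        (nhds (∫ x, (0:ℝ) ∂α)) := by
      apply tendsto_integral_of_dominated_convergence (fun x => tau (f x / 1))
      · exact fun n => (tau_measurable.comp (hfm.div_const _)).aestronglyMeasurable
      · exact hall 1 one_pos
      · intro n
        refine Eventually.of_forall fun x => ?_
        rw [Real.norm_eq_abs, abs_of_nonneg (tau_nonneg' _)]
        apply tau_mono'
        rw [abs_div, abs_div, abs_one, div_one, abs_of_pos (by positivity : (0:ℝ) < (n:ℝ)+1)]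
        exact div_le_self (abs_nonneg _) (by linarith [Nat.cast_nonneg (α := ℝ) n])
      · refine Eventually.of_forall fun x => ?_
        have hna : Tendsto (fun n : ℕ => (n:ℝ)+1) atTop atTop :=
          tendsto_atTop_add_const_right _ 1 tendsto_natCast_atTop_atTop
        have h1 : Tendsto (fun n : ℕ => f x / ((n:ℝ)+1)) atTop (nhds 0) :=
          Tendsto.div_atTop tendsto_const_nhds hna
        have := (tau_continuous.tendsto 0).comp h1
        rwa [tau_zero] at this
    rw [integral_zero] at hdom
    have hev : ∀ᶠ n : ℕ in atTop, ∫ x, tau (f x / ((n:ℝ)+1)) ∂α < 1 :=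
      hdom.eventually_lt_const one_pos
    obtain ⟨n, hn⟩ := hev.exists
    exact ⟨(n:ℝ)+1, by positivity, hn.le⟩
  have hn_bound : ∀ n : ℕ, ∫⁻ x, ENNReal.ofReal (tau (f x / (1 + 1/((n:ℝ)+1)))) ∂α ≤ 1 := by
    intro n
    have h1 : sInf S < 1 + 1/((n:ℝ)+1) := lt_of_le_of_lt hlux' (by
      have : (0:ℝ) < 1/((n:ℝ)+1) := by positivity
      linarith)
    obtain ⟨u, huS, hu⟩ := exists_lt_of_csInf_lt hSne h1
    obtain ⟨hu0, huint⟩ := huS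
    have hle : ∀ x, tau (f x / (1 + 1/((n:ℝ)+1))) ≤ tau (f x / u) := by
      intro x
      apply tau_mono'
      rw [abs_div, abs_div, abs_of_pos hu0,
        abs_of_pos (by positivity : (0:ℝ) < 1 + 1/((n:ℝ)+1))]
      exact div_le_div_of_nonneg_left (abs_nonneg _) hu0 hu.le
    calc ∫⁻ x, ENNReal.ofReal (tau (f x / (1 + 1/((n:ℝ)+1)))) ∂α
        ≤ ∫⁻ x, ENNReal.ofReal (tau (f x / u)) ∂α :=
          lintegral_mono fun x => ENNReal.ofReal_le_ofReal (hle x)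
      _ = ENNReal.ofReal (∫ x, tau (f x / u) ∂α) :=
          (ofReal_integral_eq_lintegral_ofReal (hall u hu0)
            (Eventually.of_forall fun x => tau_nonneg' _)).symm
      _ ≤ 1 := by
          rw [← ENNReal.ofReal_one]
          exact ENNReal.ofReal_le_ofReal huint
  have hfatou : ∫⁻ x, ENNReal.ofReal (tau (f x)) ∂α ≤ 1 := by
    have hptw : ∀ x, Tendsto (fun n : ℕ => ENNReal.ofReal (tau (f x / (1 + 1/((n:ℝ)+1)))))
        atTop (nhds (ENNReal.ofReal (tau (f x)))) := by
      intro x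
      have h1 : Tendsto (fun n : ℕ => (1:ℝ) + 1/((n:ℝ)+1)) atTop (nhds 1) := by
        have := tendsto_one_div_add_atTop_nhds_zero_nat (𝕜 := ℝ)
        have h2 := tendsto_const_nhds (x := (1:ℝ)) (f := atTop (α := ℕ)) |>.add this
        simpa using h2
      have h2 : Tendsto (fun n : ℕ => f x / (1 + 1/((n:ℝ)+1))) atTop (nhds (f x)) := by
        have := (tendsto_const_nhds (x := f x) (f := atTop (α := ℕ))).div h1 one_ne_zero
        simpa only [div_one, Pi.div_def] using this
      exact ((ENNReal.continuous_ofReal.comp tau_continuous).tendsto (f x)).comp h2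
    have hlim : ∫⁻ x, ENNReal.ofReal (tau (f x)) ∂α
        ≤ ∫⁻ x, liminf (fun n : ℕ => ENNReal.ofReal (tau (f x / (1 + 1/((n:ℝ)+1))))) atTop ∂α := by
      apply lintegral_mono fun x => ?_
      rw [(hptw x).liminf_eq]
    refine hlim.trans ?_
    refine (lintegral_liminf_le fun n =>
      (tau_measurable.comp (hfm.div_const _)).ennreal_ofReal).trans ?_
    exact liminf_le_of_frequently_le' (Frequently.of_forall fun n => hn_bound n)
  calc ∫⁻ x, ENNReal.ofReal (Real.exp |f x|) ∂α
      ≤ ∫⁻ x, (2 * ENNReal.ofReal (tau (f x)) + 2) ∂α := by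
        apply lintegral_mono fun x => ?_
        calc ENNReal.ofReal (Real.exp |f x|) ≤ ENNReal.ofReal (2 * tau (f x) + 2) :=
              ENNReal.ofReal_le_ofReal (exp_abs_le_two_tau' _)
          _ = 2 * ENNReal.ofReal (tau (f x)) + 2 := by
              rw [ENNReal.ofReal_add (mul_nonneg (by norm_num) (tau_nonneg' _)) (by norm_num),
                ENNReal.ofReal_mul (by norm_num : (0:ℝ) ≤ 2)]
              norm_num
    _ = 2 * (∫⁻ x, ENNReal.ofReal (tau (f x)) ∂α) + 2 := by
        rw [lintegral_add_right _ measurable_const, lintegral_const_mul _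
          (show Measurable fun a => ENNReal.ofReal (tau (f a)) from
            (tau_measurable.comp hfm).ennreal_ofReal), lintegral_const, measure_univ, mul_one]
    _ ≤ 2 * 1 + 2 := by gcongr
    _ = 4 := by norm_num

end Lux

/-- Inequality (2.13): dual Orlicz norm bound deduced from the Bolley–Villani weighted
Pinsker inequality (assumed as hypothesis `hBV`), with `q = p/(p-1)` and
`H = H(ν₁|ν₂) = ∫ log(dν₁/dν₂) dν₁ < ∞`. -/
theorem dual_orlicz_bound {E : Type*} [MeasurableSpace E]
    (α ν₁ ν₂ : Measure E) [IsProbabilityMeasure α] [IsProbabilityMeasure ν₁]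
    [IsProbabilityMeasure ν₂]
    (p : ℝ) (hp : 1 < p)
    (hν₂ : ν₂ ≪ α)
    (hLp : Integrable (fun x => ((ν₂.rnDeriv α x).toReal) ^ p) α)
    (hac : ν₁ ≪ ν₂) (hH : Integrable (MeasureTheory.llr ν₁ ν₂) ν₁)
    (Cst : ℝ) (hC : 0 < Cst)
    (hBV : ∀ f : E → ℝ, Measurable f → (∀ x, 0 ≤ f x) → ∀ δ : ℝ, 0 < δ →
      weightedTV f ν₁ ν₂ ≤ (Cst / δ) * (1 + Real.log (∫ x, Real.exp (δ * f x) ∂ν₂)) *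
        ((∫ x, MeasureTheory.llr ν₁ ν₂ x ∂ν₁) +
          Real.sqrt (∫ x, MeasureTheory.llr ν₁ ν₂ x ∂ν₁))) :
    dualOrliczNorm α ν₁ ν₂ ≤
      (p / (p - 1)) * Cst *
        (1 + Real.log ((4 : ℝ) ^ ((p - 1) / p) *
          (∫ x, ((ν₂.rnDeriv α x).toReal) ^ p ∂α) ^ (1 / p))) *
        ((∫ x, MeasureTheory.llr ν₁ ν₂ x ∂ν₁) +
          Real.sqrt (∫ x, MeasureTheory.llr ν₁ ν₂ x ∂ν₁)) := by
  have hq : p.HolderConjugate (p/(p-1)) := (Real.holderConjugate_iff_eq_conjExponent hp).mpr rfl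
  set q : ℝ := p / (p-1) with hqdef
  have hqpos : 0 < q := hq.symm.pos
  have hq1 : 1/q = (p-1)/p := by rw [hqdef, one_div_div]
  have hδpos : 0 < 1/q := one_div_pos.mpr hqpos
  set H := ∫ x, MeasureTheory.llr ν₁ ν₂ x ∂ν₁ with hHdef
  have hH0 : 0 ≤ H := integral_llr_nonneg' ν₁ ν₂ hac hH
  have hHs : 0 ≤ H + Real.sqrt H := by positivity
  set N := ∫⁻ x, (ν₂.rnDeriv α x) ^ p ∂α with hNdef
  have hN1 : 1 ≤ N := lp_ge_one α ν₂ hν₂ hq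
  have hNr : ENNReal.ofReal (∫ x, ((ν₂.rnDeriv α x).toReal) ^ p ∂α) = N :=
    lp_eq α ν₂ hν₂ (by linarith) hLp
  have hNtop : N ≠ ⊤ := by rw [← hNr]; exact ENNReal.ofReal_ne_top
  have hNreal : (1:ℝ) ≤ ∫ x, ((ν₂.rnDeriv α x).toReal) ^ p ∂α := by
    have h := hN1; rw [← hNr] at h
    exact ENNReal.one_le_ofReal.mp h
  set B : ℝ := (4:ℝ) ^ ((p-1)/p) * (∫ x, ((ν₂.rnDeriv α x).toReal) ^ p ∂α) ^ (1/p) with hBdef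
  have hB1 : 1 ≤ B := by
    have h4 : (1:ℝ) ≤ (4:ℝ) ^ ((p-1)/p) :=
      Real.one_le_rpow (by norm_num) (div_nonneg (by linarith) (by linarith))
    have hnp : (1:ℝ) ≤ (∫ x, ((ν₂.rnDeriv α x).toReal) ^ p ∂α) ^ (1/p) :=
      Real.one_le_rpow hNreal (by rw [one_div]; exact inv_nonneg.mpr (by linarith))
    nlinarith
  have hB0 : 0 ≤ B := by linarith
  have hRHS0 : 0 ≤ q * Cst * (1 + Real.log B) * (H + Real.sqrt H) := by
    have hlogB : 0 ≤ Real.log B := Real.log_nonneg hB1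
    exact mul_nonneg (mul_nonneg (mul_nonneg hqpos.le hC.le) (by linarith)) hHs
  show sSup _ ≤ _
  by_cases hbdd : BddAbove {r | ∃ f : E → ℝ, Measurable f ∧ luxNorm α f ≤ 1 ∧
      r = (∫ x, f x ∂ν₁) - ∫ x, f x ∂ν₂}
  swap
  · rw [Real.sSup_of_not_bddAbove hbdd]; exact hRHS0
  apply Real.sSup_le _ hRHS0
  rintro r ⟨f, hfm, hflux, rfl⟩
  by_cases hrpos : (∫ x, f x ∂ν₁) - ∫ x, f x ∂ν₂ ≤ 0
  · exact hrpos.trans hRHS0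
  push_neg at hrpos
  by_cases hbad : ∃ s : ℝ, 0 < s ∧ ¬ Integrable (fun x => tau (f x / s)) α
  · exfalso
    obtain ⟨s₀, hs₀pos, hs₀⟩ := hbad
    obtain ⟨b, hb⟩ := hbdd
    set r := (∫ x, f x ∂ν₁) - ∫ x, f x ∂ν₂ with hrdef
    set c := (|b| + 1) / r with hcdef
    have hcpos : 0 < c := div_pos (by positivity) hrpos
    have hmem : c * r ∈ {r | ∃ f : E → ℝ, Measurable f ∧ luxNorm α f ≤ 1 ∧
        r = (∫ x, f x ∂ν₁) - ∫ x, f x ∂ν₂} := by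
      refine ⟨fun x => c * f x, hfm.const_mul c, ?_, ?_⟩
      · show sInf _ ≤ _
        set m := min 1 (c * s₀) with hmdef
        have hm0 : 0 < m := lt_min one_pos (mul_pos hcpos hs₀pos)
        have hnint : ¬ Integrable (fun x => tau ((c * f x) / m)) α := by
          intro hcon
          apply hs₀
          refine hcon.mono'
            ((tau_measurable.comp (hfm.div_const _))).aestronglyMeasurable
            (Filter.Eventually.of_forall fun x => ?_)
          rw [Real.norm_eq_abs, abs_of_nonneg (tau_nonneg' _)]
          apply tau_mono'
          rw [abs_div, abs_div, abs_of_pos hs₀pos, abs_of_pos hm0, abs_mul,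
            abs_of_pos hcpos]
          rw [div_le_div_iff₀ hs₀pos hm0]
          have hm_le : m ≤ c * s₀ := min_le_right _ _
          nlinarith [abs_nonneg (f x)]
        refine csInf_le_of_le ⟨0, fun t ht => ht.1.le⟩
          (show m ∈ _ from ⟨hm0, by rw [integral_undef hnint]; norm_num⟩) (min_le_left _ _)
      · rw [integral_const_mul, integral_const_mul]; ring
    have hble := hb hmem
    have hcr : c * r = |b| + 1 := by rw [hcdef]; field_simp
    rw [hcr] at hble; linarith [le_abs_self b]
  · push_neg at hbad
    have hK : ∫⁻ x, ENNReal.ofReal (Real.exp |f x|) ∂α ≤ 4 := lux_exp_bound hfm hflux hbad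
    have hEM := exp_moment hν₂ hq hfm hK
    have hBtop : (4:ℝ≥0∞) ^ (1/q) * N ^ (1/p) ≠ ⊤ :=
      ENNReal.mul_ne_top (ENNReal.rpow_ne_top_of_nonneg hδpos.le (by norm_num))
        (ENNReal.rpow_ne_top_of_nonneg (one_div_nonneg.mpr hq.pos.le) hNtop)
    have hfinEM : ∫⁻ x, ENNReal.ofReal (Real.exp ((1/q) * |f x|)) ∂ν₂ ≠ ⊤ :=
      ne_top_of_le_ne_top hBtop hEM
    have hintf2 : Integrable f ν₂ := integrable_of_expmoment hfm hδpos hfinEM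
    have hintf1 : Integrable f ν₁ := integrable_left hfm hac hH hδpos hfinEM
    have hexpint : Integrable (fun x => Real.exp ((1/q) * |f x|)) ν₂ :=
      ⟨((hfm.abs.const_mul (1/q)).exp).aestronglyMeasurable,
        (hasFiniteIntegral_iff_ofReal
          (Filter.Eventually.of_forall fun x => (Real.exp_pos _).le)).mpr hfinEM.lt_top⟩
    set I := ∫ x, Real.exp ((1/q) * |f x|) ∂ν₂ with hIdef
    have hI1 : (1:ℝ) ≤ I := by
      calc (1:ℝ) = ∫ _x, (1:ℝ) ∂ν₂ := by simp
        _ ≤ I := integral_mono (integrable_const 1) hexpint fun x =>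
            Real.one_le_exp (mul_nonneg hδpos.le (abs_nonneg _))
    have hIB : I ≤ B := by
      have h1 : ENNReal.ofReal I = ∫⁻ x, ENNReal.ofReal (Real.exp ((1/q) * |f x|)) ∂ν₂ :=
        ofReal_integral_eq_lintegral_ofReal hexpint
          (Filter.Eventually.of_forall fun x => (Real.exp_pos _).le)
      have h2 : ENNReal.ofReal B = (4:ℝ≥0∞) ^ (1/q) * N ^ (1/p) := by
        rw [hBdef, ENNReal.ofReal_mul (by positivity)]
        congr 1
        · rw [← hq1, ← ENNReal.ofReal_rpow_of_pos (by norm_num : (0:ℝ) < 4)]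
          norm_num
        · rw [← hNr, ← ENNReal.ofReal_rpow_of_pos (by linarith :
            (0:ℝ) < ∫ x, ((ν₂.rnDeriv α x).toReal) ^ p ∂α)]
      have h3 : ENNReal.ofReal I ≤ ENNReal.ofReal B := by
        rw [h1, h2]; exact hEM
      exact (ENNReal.ofReal_le_ofReal_iff hB0).mp h3
    have hTV := hBV (fun x => |f x|) hfm.abs (fun x => abs_nonneg _) (1/q) hδpos
    have hr_le : (∫ x, f x ∂ν₁) - ∫ x, f x ∂ν₂ ≤ weightedTV (fun x => |f x|) ν₁ ν₂ :=
      le_weightedTV hfm hintf1 hintf2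
    have hlog : Real.log I ≤ Real.log B := Real.log_le_log (by linarith) hIB
    calc (∫ x, f x ∂ν₁) - ∫ x, f x ∂ν₂
        ≤ weightedTV (fun x => |f x|) ν₁ ν₂ := hr_le
      _ ≤ (Cst / (1/q)) * (1 + Real.log I) * (H + Real.sqrt H) := hTV
      _ ≤ (Cst / (1/q)) * (1 + Real.log B) * (H + Real.sqrt H) := by
          apply mul_le_mul_of_nonneg_right _ hHs
          apply mul_le_mul_of_nonneg_left (by linarith) (div_pos hC hδpos).le
      _ = q * Cst * (1 + Real.log B) * (H + Real.sqrt H) := by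
          rw [div_div_eq_mul_div, div_one]; ring
end

section
/- Let Q, Q', Q₀ be probability measures on a finite set with Q' and Q₀ everywhere positive, and suppose Q is a Markov chain path measure with the same transition kernel as Q' (i.e., Q disintegrates with the same one-step conditionals as Q') and the same one-dimensional marginals as Q'. Then the relative entropy satisfies the Pythagoras-type identity H(Q|Q₀) = H(Q|Q') + H(Q'|Q₀), provided Q₀ is also a Markov measure (so that log(dQ'/dQ₀) is a sum of functions of consecutive states whose Q-expectation equals its Q'-expectation). -/
open MeasureTheory Set
open scoped ENNReal Classical

/-- Relative entropy `H(β|γ)`, with value `∞` unless `β ≪ γ` with integrable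
log-likelihood ratio. -/
noncomputable def relEntropy {E : Type*} [MeasurableSpace E] (β γ : Measure E) : ℝ≥0∞ :=
  if β ≪ γ ∧ Integrable (MeasureTheory.llr β γ) β then
    ENNReal.ofReal (∫ x, MeasureTheory.llr β γ x ∂β) else ⊤

section Helpers

set_option linter.unusedSectionVars false
variable {Ω : Type*} [Fintype Ω] [MeasurableSpace Ω] [MeasurableSingletonClass Ω]

lemma meas_finset (μ : Measure Ω) (s : Finset Ω) : μ ↑s = ∑ ω ∈ s, μ {ω} := by
  rw [show (↑s : Set Ω) = ⋃ ω ∈ s, {ω} by ext x; simp]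
  rw [measure_biUnion_finset ?_ (fun _ _ => measurableSet_singleton _)]
  · intro a _ b _ hab
    simp [Function.onFun, hab]

lemma meas_eq_sum (μ : Measure Ω) (s : Set Ω) :
    μ s = ∑ ω, if ω ∈ s then μ {ω} else 0 := by
  classical
  have h1 : μ s = ∑ ω ∈ s.toFinset, μ {ω} := by
    rw [← meas_finset]; congr 1; simp
  rw [h1, ← Finset.sum_filter]
  congr 1
  ext ω; simp

lemma meas_eq_sum' (μ : Measure Ω) (s : Set Ω) :
    μ s = ∑ ω, s.indicator (fun ω => μ {ω}) ω := by
  rw [meas_eq_sum]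
  exact Finset.sum_congr rfl fun ω _ => by
    by_cases hω : ω ∈ s <;> simp [Set.indicator_apply, hω]

lemma meas_toReal (μ : Measure Ω) [IsFiniteMeasure μ] (s : Set Ω) :
    (μ s).toReal = ∑ ω, if ω ∈ s then (μ {ω}).toReal else 0 := by
  rw [meas_eq_sum, ENNReal.toReal_sum (by intro a _; split <;> simp [measure_ne_top])]
  congr 1 with ω
  split <;> simp

lemma ac_of_singletons {μ ν : Measure Ω} (h : ∀ ω, ν {ω} = 0 → μ {ω} = 0) : μ ≪ ν := by
  intro s hs
  rw [meas_eq_sum ν] at hs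
  rw [meas_eq_sum μ]
  refine Finset.sum_eq_zero fun ω _ => ?_
  by_cases hω : ω ∈ s
  · simp only [hω, if_true]
    refine h ω ?_
    have hle : (if ω ∈ s then ν {ω} else 0) ≤ 0 :=
      le_of_le_of_eq (Finset.single_le_sum (f := fun ω => if ω ∈ s then ν {ω} else 0)
        (fun _ _ => zero_le) (Finset.mem_univ ω)) hs
    simpa [hω] using le_antisymm hle zero_le
  · simp [hω]


lemma measure_ext_singleton {μ ν : Measure Ω} (h : ∀ ω, μ {ω} = ν {ω}) : μ = ν := by
  ext s hs
  rw [meas_eq_sum, meas_eq_sum]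
  exact Finset.sum_congr rfl fun ω _ => by by_cases hω : ω ∈ s <;> simp [hω, h ω]

lemma withDensity_ratio (μ ν : Measure Ω) [IsFiniteMeasure μ] [IsFiniteMeasure ν]
    (h : ∀ ω, ν {ω} = 0 → μ {ω} = 0) :
    ν.withDensity (fun ω => μ {ω} / ν {ω}) = μ := by
  refine measure_ext_singleton fun ω => ?_
  rw [withDensity_apply _ (measurableSet_singleton ω), lintegral_singleton]
  rcases eq_or_ne (ν {ω}) 0 with h0 | h0
  · simp [h0, h _ h0]
  · exact ENNReal.div_mul_cancel h0 (measure_ne_top ν _)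

lemma llr_ae_eq (μ ν : Measure Ω) [IsFiniteMeasure μ] [IsFiniteMeasure ν]
    (h : ∀ ω, ν {ω} = 0 → μ {ω} = 0) :
    llr μ ν =ᵐ[μ] fun ω => Real.log ((μ {ω}).toReal / (ν {ω}).toReal) := by
  have hf : Measurable (fun ω => μ {ω} / ν {ω}) := measurable_of_countable _
  have hrn : μ.rnDeriv ν =ᵐ[ν] fun ω => μ {ω} / ν {ω} := by
    conv_lhs => rw [← withDensity_ratio μ ν h]
    exact Measure.rnDeriv_withDensity ν hf
  have hac : μ ≪ ν := ac_of_singletons h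
  filter_upwards [hac.ae_le hrn] with ω hω
  simp only [llr_def, hω, ENNReal.toReal_div]

lemma relEntropy_eq (μ ν : Measure Ω) [IsFiniteMeasure μ] [IsFiniteMeasure ν]
    (h : ∀ ω, ν {ω} = 0 → μ {ω} = 0) :
    relEntropy μ ν =
      ENNReal.ofReal (∑ ω, (μ {ω}).toReal * Real.log ((μ {ω}).toReal / (ν {ω}).toReal)) := by
  rw [relEntropy, if_pos ⟨ac_of_singletons h, Integrable.of_finite⟩]
  congr 1
  rw [integral_congr_ae (llr_ae_eq μ ν h), integral_fintype Integrable.of_finite]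
  simp [smul_eq_mul, Measure.real]

lemma gibbs_nonneg (μ ν : Measure Ω) [IsProbabilityMeasure μ] [IsProbabilityMeasure ν]
    (h : ∀ ω, ν {ω} = 0 → μ {ω} = 0) :
    0 ≤ ∑ ω, (μ {ω}).toReal * Real.log ((μ {ω}).toReal / (ν {ω}).toReal) := by
  have hsum : ∀ (ρ : Measure Ω), IsProbabilityMeasure ρ → ∑ ω, (ρ {ω}).toReal = 1 := by
    intro ρ hρ
    have := meas_toReal ρ (Set.univ : Set Ω)
    simpa using this.symm
  have key : ∀ ω, (μ {ω}).toReal - (ν {ω}).toReal ≤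
      (μ {ω}).toReal * Real.log ((μ {ω}).toReal / (ν {ω}).toReal) := by
    intro ω
    rcases eq_or_ne (μ {ω}) 0 with hz | hz
    · have : 0 ≤ (ν {ω}).toReal := ENNReal.toReal_nonneg
      simp only [hz, ENNReal.toReal_zero, zero_mul, zero_sub]
      linarith
    · have hp : 0 < (μ {ω}).toReal := ENNReal.toReal_pos hz (measure_ne_top _ _)
      have hq : 0 < (ν {ω}).toReal :=
        ENNReal.toReal_pos (fun h' => hz (h ω h')) (measure_ne_top _ _)
      have hlog : Real.log ((ν {ω}).toReal / (μ {ω}).toReal) ≤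
          (ν {ω}).toReal / (μ {ω}).toReal - 1 :=
        Real.log_le_sub_one_of_pos (div_pos hq hp)
      have hinv : Real.log ((μ {ω}).toReal / (ν {ω}).toReal) =
          - Real.log ((ν {ω}).toReal / (μ {ω}).toReal) := by
        rw [← Real.log_inv, inv_div]
      have h1 : 1 - (ν {ω}).toReal / (μ {ω}).toReal ≤
          Real.log ((μ {ω}).toReal / (ν {ω}).toReal) := by
        rw [hinv]; linarith
      calc (μ {ω}).toReal - (ν {ω}).toReal
          = (μ {ω}).toReal * (1 - (ν {ω}).toReal / (μ {ω}).toReal) := by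
            rw [mul_sub, mul_one, mul_div_cancel₀ _ (ne_of_gt hp)]
        _ ≤ _ := mul_le_mul_of_nonneg_left h1 hp.le
  calc (0:ℝ) = ∑ ω, ((μ {ω}).toReal - (ν {ω}).toReal) := by
        rw [Finset.sum_sub_distrib, hsum μ inferInstance, hsum ν inferInstance]; ring
    _ ≤ _ := Finset.sum_le_sum (fun ω _ => key ω)

end Helpers

section Chain
set_option linter.unusedSectionVars false
variable {S : Type*} [Fintype S]

/-- weight of a path under a Markov chain with kernels `A` started at `x₀`. -/
noncomputable def chainW (x₀ : S) (A : ℕ → S → S → ℝ≥0∞) (m : ℕ) (ω : Fin (m + 1) → S) : ℝ≥0∞ :=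
  (if ω 0 = x₀ then 1 else 0) * ∏ k : Fin m, A k (ω k.castSucc) (ω k.succ)

/-- marginal distribution at time `j`. -/
noncomputable def chainMarg (x₀ : S) (A : ℕ → S → S → ℝ≥0∞) : ℕ → S → ℝ≥0∞
  | 0 => fun a => if a = x₀ then 1 else 0
  | (j + 1) => fun b => ∑ a, chainMarg x₀ A j a * A j a b

lemma chainW_snoc (x₀ : S) (A : ℕ → S → S → ℝ≥0∞) (m : ℕ) (ω : Fin (m + 1) → S) (x : S) :
    chainW x₀ A (m + 1) (Fin.snoc ω x) = chainW x₀ A m ω * A m (ω (Fin.last m)) x := by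
  unfold chainW
  rw [Fin.prod_univ_castSucc]
  have h0 : (Fin.snoc ω x : Fin (m + 2) → S) 0 = ω 0 := by
    rw [show (0 : Fin (m + 2)) = Fin.castSucc 0 by rfl, Fin.snoc_castSucc]
  have hlast : (Fin.snoc ω x : Fin (m + 2) → S) ((Fin.last m).castSucc) = ω (Fin.last m) :=
    Fin.snoc_castSucc _ _ _
  have hlast2 : (Fin.snoc ω x : Fin (m + 2) → S) ((Fin.last m).succ) = x := by
    rw [show (Fin.last m).succ = Fin.last (m + 1) by rfl, Fin.snoc_last]
  have hmid : ∀ k : Fin m,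
      A (k.castSucc : Fin (m+1)) ((Fin.snoc ω x : Fin (m + 2) → S) k.castSucc.castSucc)
        ((Fin.snoc ω x : Fin (m + 2) → S) k.castSucc.succ)
      = A k (ω k.castSucc) (ω k.succ) := by
    intro k
    rw [Fin.snoc_castSucc, Fin.succ_castSucc, Fin.snoc_castSucc]
    rfl
  rw [h0, hlast, hlast2, Finset.prod_congr rfl (fun k _ => hmid k)]
  push_cast
  ring

lemma sum_snoc (m : ℕ) (F : (Fin (m + 2) → S) → ℝ≥0∞) :
    ∑ ω : Fin (m + 2) → S, F ω = ∑ ω : Fin (m + 1) → S, ∑ x : S, F (Fin.snoc ω x) := by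
  rw [← (Fin.snocEquiv (fun _ : Fin (m + 2) => S)).sum_comp F]
  rw [Fintype.sum_prod_type]
  rw [Finset.sum_comm]
  rfl

lemma chain_last (x₀ : S) (A : ℕ → S → S → ℝ≥0∞) (m : ℕ) (h : S → ℝ≥0∞) :
    ∑ ω : Fin (m + 1) → S, chainW x₀ A m ω * h (ω (Fin.last m))
      = ∑ a, chainMarg x₀ A m a * h a := by
  induction m generalizing h with
  | zero =>
    rw [← (Equiv.funUnique (Fin 1) S).symm.sum_comp]
    simp [chainW, chainMarg, Equiv.funUnique]
  | succ m ih =>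
    rw [sum_snoc]
    have : ∀ (ω : Fin (m + 1) → S) (x : S),
        chainW x₀ A (m + 1) (Fin.snoc ω x) * h ((Fin.snoc ω x : Fin (m+2) → S) (Fin.last (m+1)))
        = chainW x₀ A m ω * (A m (ω (Fin.last m)) x * h x) := by
      intro ω x
      rw [chainW_snoc, Fin.snoc_last]
      ring
    simp only [this]
    simp only [← Finset.mul_sum]
    rw [ih (fun a => ∑ x, A m a x * h x)]
    simp only [chainMarg, Finset.sum_mul, Finset.mul_sum, mul_assoc]
    exact Finset.sum_comm

lemma chain_marg (x₀ : S) (A : ℕ → S → S → ℝ≥0∞) (hA : ∀ k a, (∑ b, A k a b) = 1) :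
    ∀ (m j : ℕ) (hj : j ≤ m) (h : S → ℝ≥0∞),
    ∑ ω : Fin (m + 1) → S, chainW x₀ A m ω * h (ω ⟨j, Nat.lt_succ_of_le hj⟩)
      = ∑ a, chainMarg x₀ A j a * h a := by
  intro m
  induction m with
  | zero =>
    intro j hj h
    have hj0 : j = 0 := Nat.le_zero.mp hj
    subst hj0
    exact chain_last x₀ A 0 h
  | succ m ih =>
    intro j hj h
    rcases Nat.lt_or_ge j (m + 1) with hjm | hjm
    · have hjm' : j ≤ m := Nat.lt_succ_iff.mp hjm
      rw [sum_snoc]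
      have key : ∀ (ω : Fin (m + 1) → S) (x : S),
          chainW x₀ A (m + 1) (Fin.snoc ω x) *
            h ((Fin.snoc ω x : Fin (m + 2) → S) ⟨j, Nat.lt_succ_of_le hj⟩)
          = chainW x₀ A m ω * h (ω ⟨j, Nat.lt_succ_of_le hjm'⟩) * A m (ω (Fin.last m)) x := by
        intro ω x
        rw [chainW_snoc]
        have harg : (Fin.snoc ω x : Fin (m + 2) → S) ⟨j, Nat.lt_succ_of_le hj⟩
            = ω ⟨j, Nat.lt_succ_of_le hjm'⟩ := by
          rw [show (⟨j, Nat.lt_succ_of_le hj⟩ : Fin (m + 2))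
              = Fin.castSucc ⟨j, Nat.lt_succ_of_le hjm'⟩ from rfl, Fin.snoc_castSucc]
        rw [harg]; ring
      simp only [key]
      rw [Finset.sum_congr rfl fun ω _ => by rw [← Finset.mul_sum, hA, mul_one]]
      exact ih j hjm' h
    · have hjm' : j = m + 1 := le_antisymm hj hjm
      subst hjm'
      exact chain_last x₀ A (m + 1) h

lemma chain_pair (x₀ : S) (A : ℕ → S → S → ℝ≥0∞) (hA : ∀ k a, (∑ b, A k a b) = 1) :
    ∀ (m j : ℕ) (hj : j + 1 ≤ m) (h : S → S → ℝ≥0∞),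
    ∑ ω : Fin (m + 1) → S, chainW x₀ A m ω *
        h (ω ⟨j, by omega⟩) (ω ⟨j + 1, by omega⟩)
      = ∑ a, ∑ b, chainMarg x₀ A j a * A j a b * h a b := by
  intro m
  induction m with
  | zero => intro j hj h; omega
  | succ m ih =>
    intro j hj h
    rcases Nat.lt_or_ge (j + 1) (m + 1) with hjm | hjm
    · have hjm' : j + 1 ≤ m := Nat.lt_succ_iff.mp hjm
      rw [sum_snoc]
      have key : ∀ (ω : Fin (m + 1) → S) (x : S),
          chainW x₀ A (m + 1) (Fin.snoc ω x) *
            h ((Fin.snoc ω x : Fin (m + 2) → S) ⟨j, by omega⟩)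
              ((Fin.snoc ω x : Fin (m + 2) → S) ⟨j + 1, by omega⟩)
          = chainW x₀ A m ω * h (ω ⟨j, by omega⟩) (ω ⟨j + 1, by omega⟩)
              * A m (ω (Fin.last m)) x := by
        intro ω x
        rw [chainW_snoc]
        have harg1 : (Fin.snoc ω x : Fin (m + 2) → S) ⟨j, by omega⟩
            = ω ⟨j, by omega⟩ := by
          rw [show (⟨j, by omega⟩ : Fin (m + 2))
              = Fin.castSucc ⟨j, by omega⟩ from rfl, Fin.snoc_castSucc]
        have harg2 : (Fin.snoc ω x : Fin (m + 2) → S) ⟨j + 1, by omega⟩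
            = ω ⟨j + 1, by omega⟩ := by
          rw [show (⟨j + 1, by omega⟩ : Fin (m + 2))
              = Fin.castSucc ⟨j + 1, by omega⟩ from rfl, Fin.snoc_castSucc]
        rw [harg1, harg2]; ring
      simp only [key]
      rw [Finset.sum_congr rfl fun ω _ => by rw [← Finset.mul_sum, hA, mul_one]]
      exact ih j hjm' h
    · have hjm' : m = j := by omega
      subst hjm'
      rw [sum_snoc]
      have key : ∀ (ω : Fin (m + 1) → S) (x : S),
          chainW x₀ A (m + 1) (Fin.snoc ω x) *
            h ((Fin.snoc ω x : Fin (m + 2) → S) ⟨m, by omega⟩)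
              ((Fin.snoc ω x : Fin (m + 2) → S) ⟨m + 1, by omega⟩)
          = chainW x₀ A m ω * (A m (ω (Fin.last m)) x * h (ω (Fin.last m)) x) := by
        intro ω x
        rw [chainW_snoc]
        have harg1 : (Fin.snoc ω x : Fin (m + 2) → S) ⟨m, by omega⟩ = ω (Fin.last m) := by
          rw [show (⟨m, by omega⟩ : Fin (m + 2)) = Fin.castSucc (Fin.last m) from rfl,
            Fin.snoc_castSucc]
        have harg2 : (Fin.snoc ω x : Fin (m + 2) → S) ⟨m + 1, by omega⟩ = x := by
          rw [show (⟨m + 1, by omega⟩ : Fin (m + 2)) = Fin.last (m + 1) from rfl, Fin.snoc_last]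
        rw [harg1, harg2]; ring
      simp only [key]
      simp only [← Finset.mul_sum]
      rw [chain_last x₀ A m (fun a => ∑ x, A m a x * h a x)]
      simp only [Finset.mul_sum, mul_assoc]

end Chain


section Markov
set_option linter.unusedSectionVars false
variable {S : Type*} [Fintype S] [MeasurableSpace S] [MeasurableSingletonClass S]

noncomputable def extKernel (n : ℕ) (P : Fin n → S → S → ℝ≥0∞) : ℕ → S → S → ℝ≥0∞ :=
  fun k => if h : k < n then P ⟨k, h⟩ else fun a b => if b = a then 1 else 0

lemma extKernel_lt {n : ℕ} {P : Fin n → S → S → ℝ≥0∞} (k : Fin n) :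
    extKernel n P k.1 = P k := by
  simp [extKernel, k.isLt]

lemma extKernel_sum {n : ℕ} {P : Fin n → S → S → ℝ≥0∞}
    (hP : ∀ k a, (∑ b, P k a b) = 1) (k : ℕ) (a : S) :
    (∑ b, extKernel n P k a b) = 1 := by
  by_cases hk : k < n
  · simp only [extKernel, dif_pos hk]; exact hP _ a
  · simp [extKernel, dif_neg hk]

lemma markov_measure_marg {n : ℕ} (μ : Measure (Fin (n + 1) → S)) (x₀ : S)
    (A : ℕ → S → S → ℝ≥0∞) (hA : ∀ k a, (∑ b, A k a b) = 1)
    (hμ : ∀ ω, μ {ω} = chainW x₀ A n ω) (t : Fin (n + 1)) (a : S) :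
    μ {ω | ω t = a} = chainMarg x₀ A t.1 a := by
  rw [meas_eq_sum]
  have ht : t.1 ≤ n := Nat.lt_succ_iff.mp t.isLt
  have step : ∀ ω : Fin (n + 1) → S,
      (if ω ∈ {ω : Fin (n + 1) → S | ω t = a} then μ {ω} else 0)
      = chainW x₀ A n ω * (if ω ⟨t.1, Nat.lt_succ_of_le ht⟩ = a then 1 else 0) := by
    intro ω
    have : (⟨t.1, Nat.lt_succ_of_le ht⟩ : Fin (n + 1)) = t := by exact Fin.eta t _
    rw [this]
    by_cases hω : ω t = a <;> simp [hω, hμ]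
  refine (Finset.sum_congr rfl fun ω _ => step ω).trans ?_
  refine (chain_marg x₀ A hA n t.1 ht (fun c => if c = a then 1 else 0)).trans ?_
  simp [Finset.sum_ite_eq]

lemma markov_measure_pair {n : ℕ} (μ : Measure (Fin (n + 1) → S)) (x₀ : S)
    (A : ℕ → S → S → ℝ≥0∞) (hA : ∀ k a, (∑ b, A k a b) = 1)
    (hμ : ∀ ω, μ {ω} = chainW x₀ A n ω) (k : Fin n) (a b : S) :
    μ {ω | ω k.castSucc = a ∧ ω k.succ = b} = chainMarg x₀ A k.1 a * A k.1 a b := by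
  rw [meas_eq_sum']
  have hk : k.1 + 1 ≤ n := k.isLt
  have step : ∀ ω : Fin (n + 1) → S,
      ({ω : Fin (n + 1) → S | ω k.castSucc = a ∧ ω k.succ = b}).indicator
        (fun ω => μ {ω}) ω
      = chainW x₀ A n ω *
        (if ω ⟨k.1, by omega⟩ = a ∧ ω ⟨k.1 + 1, by omega⟩ = b then 1 else 0) := by
    intro ω
    have h1 : (⟨k.1, by omega⟩ : Fin (n + 1)) = k.castSucc := rfl
    have h2 : (⟨k.1 + 1, by omega⟩ : Fin (n + 1)) = k.succ := rfl
    rw [h1, h2]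
    by_cases hω : ω k.castSucc = a ∧ ω k.succ = b <;> simp [Set.indicator_apply, hω, hμ]
  refine (Finset.sum_congr rfl fun ω _ => step ω).trans ?_
  refine (chain_pair x₀ A hA n k.1 hk (fun c d => if c = a ∧ d = b then 1 else 0)).trans ?_
  simp [ite_and, Finset.sum_ite_eq, mul_ite]

lemma exp_pair {n : ℕ} (μ : Measure (Fin (n + 1) → S)) [IsFiniteMeasure μ]
    (k : Fin n) (g : S → S → ℝ) :
    ∑ ω : Fin (n + 1) → S, (μ {ω}).toReal * g (ω k.castSucc) (ω k.succ)
    = ∑ a, ∑ b,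
        (μ {ω : Fin (n + 1) → S | ω k.castSucc = a ∧ ω k.succ = b}).toReal * g a b := by
  have : ∀ a b, (μ {ω : Fin (n + 1) → S | ω k.castSucc = a ∧ ω k.succ = b}).toReal * g a b
      = ∑ ω : Fin (n + 1) → S,
          (if ω k.castSucc = a ∧ ω k.succ = b then (μ {ω}).toReal * g a b else 0) := by
    intro a b
    rw [meas_toReal, Finset.sum_mul]
    exact Finset.sum_congr rfl fun ω _ => by
      by_cases hω : ω k.castSucc = a ∧ ω k.succ = b <;> simp [hω]
  simp only [this]
  have swap : ∀ (F : S → S → (Fin (n + 1) → S) → ℝ),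
      ∑ a, ∑ b, ∑ ω : Fin (n + 1) → S, F a b ω
      = ∑ ω : Fin (n + 1) → S, ∑ a, ∑ b, F a b ω := by
    intro F
    calc ∑ a, ∑ b, ∑ ω : Fin (n + 1) → S, F a b ω
        = ∑ a, ∑ ω : Fin (n + 1) → S, ∑ b, F a b ω :=
          Finset.sum_congr rfl fun a _ => Finset.sum_comm
      _ = _ := Finset.sum_comm
  rw [swap]
  refine Finset.sum_congr rfl fun ω _ => ?_
  symm
  simp [ite_and, Finset.sum_ite_eq]

end Markov

/-- Pythagoras-type identity for relative entropy (formula (lemmaH4)): if `Q'` and `Q₀` are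
Markov path measures on a finite state space, started at `x₀`, with everywhere-positive
transition kernels `Π` and `Π₀`, and if `Q` starts at `x₀`, has the same one-step conditionals
given the current state as `Q'`, and the same one-dimensional marginals as `Q'`, then
`H(Q|Q₀) = H(Q|Q') + H(Q'|Q₀)`. -/
theorem entropy_pythagoras_markov {S : Type*} [Fintype S] [MeasurableSpace S]
    [MeasurableSingletonClass S] (n : ℕ)
    (Q Q' Q₀ : Measure (Fin (n + 1) → S))
    [IsProbabilityMeasure Q] [IsProbabilityMeasure Q'] [IsProbabilityMeasure Q₀]
    (x₀ : S)
    (P P₀ : Fin n → S → S → ℝ≥0∞)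
    (hPpos : ∀ k a b, 0 < P k a b) (hP₀pos : ∀ k a b, 0 < P₀ k a b)
    (hPsum : ∀ k a, (∑ b, P k a b) = 1) (hP₀sum : ∀ k a, (∑ b, P₀ k a b) = 1)
    (hQ' : ∀ ω : Fin (n + 1) → S,
      Q' {ω} = (if ω 0 = x₀ then 1 else 0) * ∏ k : Fin n, P k (ω k.castSucc) (ω k.succ))
    (hQ₀ : ∀ ω : Fin (n + 1) → S,
      Q₀ {ω} = (if ω 0 = x₀ then 1 else 0) * ∏ k : Fin n, P₀ k (ω k.castSucc) (ω k.succ))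
    (hQstart : Q {ω | ω 0 = x₀} = 1)
    (hQcond : ∀ k : Fin n, ∀ a b : S,
      Q {ω | ω k.castSucc = a ∧ ω k.succ = b} = Q {ω | ω k.castSucc = a} * P k a b)
    (hmarg : ∀ k : Fin (n + 1), ∀ a : S, Q {ω | ω k = a} = Q' {ω | ω k = a}) :
    relEntropy Q Q₀ = relEntropy Q Q' + relEntropy Q' Q₀ := by
  set A : ℕ → S → S → ℝ≥0∞ := extKernel n P with hAdef
  have hA : ∀ k a, (∑ b, A k a b) = 1 := extKernel_sum hPsum
  have hQ'W : ∀ ω, Q' {ω} = chainW x₀ A n ω := by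
    intro ω
    rw [hQ' ω, chainW]
    congr 1
    exact Finset.prod_congr rfl fun k _ => by rw [hAdef, extKernel_lt]
  -- positivity and vanishing facts
  have hPfin : ∀ k a b, P k a b ≠ ⊤ := fun k a b =>
    ne_top_of_le_ne_top ENNReal.one_ne_top
      (le_of_le_of_eq (Finset.single_le_sum (fun _ _ => zero_le) (Finset.mem_univ b))
        (hPsum k a))
  have hP₀fin : ∀ k a b, P₀ k a b ≠ ⊤ := fun k a b =>
    ne_top_of_le_ne_top ENNReal.one_ne_top
      (le_of_le_of_eq (Finset.single_le_sum (fun _ _ => zero_le) (Finset.mem_univ b))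
        (hP₀sum k a))
  have hQ'pos : ∀ ω, ω 0 = x₀ → Q' {ω} ≠ 0 := by
    intro ω h
    rw [hQ' ω, if_pos h, one_mul]
    exact Finset.prod_ne_zero_iff.mpr fun k _ => (hPpos k _ _).ne'
  have hQ₀pos : ∀ ω, ω 0 = x₀ → Q₀ {ω} ≠ 0 := by
    intro ω h
    rw [hQ₀ ω, if_pos h, one_mul]
    exact Finset.prod_ne_zero_iff.mpr fun k _ => (hP₀pos k _ _).ne'
  have hQ'zero : ∀ ω, ω 0 ≠ x₀ → Q' {ω} = 0 := by
    intro ω h; rw [hQ' ω, if_neg h, zero_mul]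
  have hQzero : ∀ ω, ω 0 ≠ x₀ → Q {ω} = 0 := by
    intro ω h
    have hms : MeasurableSet {ω : Fin (n + 1) → S | ω 0 = x₀} := (Set.toFinite _).measurableSet
    have hc : Q {ω : Fin (n + 1) → S | ω 0 = x₀}ᶜ = 0 := by
      rw [prob_compl_eq_one_sub hms, hQstart, tsub_self]
    exact measure_mono_null (Set.singleton_subset_iff.mpr h) hc
  have acQQ' : ∀ ω, Q' {ω} = 0 → Q {ω} = 0 := fun ω h =>
    hQzero ω (fun h0 => hQ'pos ω h0 h)
  have acQQ₀ : ∀ ω, Q₀ {ω} = 0 → Q {ω} = 0 := fun ω h =>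
    hQzero ω (fun h0 => hQ₀pos ω h0 h)
  have acQ'Q₀ : ∀ ω, Q₀ {ω} = 0 → Q' {ω} = 0 := fun ω h =>
    hQ'zero ω (fun h0 => hQ₀pos ω h0 h)
  rw [relEntropy_eq Q Q₀ acQQ₀, relEntropy_eq Q Q' acQQ', relEntropy_eq Q' Q₀ acQ'Q₀,
    ← ENNReal.ofReal_add (gibbs_nonneg Q Q' acQQ') (gibbs_nonneg Q' Q₀ acQ'Q₀)]
  congr 1
  set G : (Fin (n + 1) → S) → ℝ := fun ω => ∑ k : Fin n,
    (Real.log (P k (ω k.castSucc) (ω k.succ)).toReal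
      - Real.log (P₀ k (ω k.castSucc) (ω k.succ)).toReal) with hG
  have claim1 : ∀ ω, ω 0 = x₀ →
      Real.log ((Q' {ω}).toReal / (Q₀ {ω}).toReal) = G ω := by
    intro ω h
    have hne : ∀ k : Fin n, (P k (ω k.castSucc) (ω k.succ)).toReal ≠ 0 := fun k =>
      (ENNReal.toReal_pos (hPpos k _ _).ne' (hPfin k _ _)).ne'
    have hne₀ : ∀ k : Fin n, (P₀ k (ω k.castSucc) (ω k.succ)).toReal ≠ 0 := fun k =>
      (ENNReal.toReal_pos (hP₀pos k _ _).ne' (hP₀fin k _ _)).ne'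
    rw [hQ' ω, hQ₀ ω, if_pos h, one_mul, one_mul, ENNReal.toReal_prod, ENNReal.toReal_prod,
      Real.log_div (Finset.prod_ne_zero_iff.mpr fun k _ => hne k)
        (Finset.prod_ne_zero_iff.mpr fun k _ => hne₀ k),
      Real.log_prod (fun k _ => hne k), Real.log_prod (fun k _ => hne₀ k),
      hG, ← Finset.sum_sub_distrib]
  have split : ∀ ω : Fin (n + 1) → S,
      (Q {ω}).toReal * Real.log ((Q {ω}).toReal / (Q₀ {ω}).toReal)
      = (Q {ω}).toReal * Real.log ((Q {ω}).toReal / (Q' {ω}).toReal)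
        + (Q {ω}).toReal * Real.log ((Q' {ω}).toReal / (Q₀ {ω}).toReal) := by
    intro ω
    rcases eq_or_ne (Q {ω}) 0 with hz | hz
    · simp [hz]
    · have h0 : ω 0 = x₀ := by
        by_contra h; exact hz (hQzero ω h)
      have hq : 0 < (Q {ω}).toReal := ENNReal.toReal_pos hz (measure_ne_top _ _)
      have hq' : 0 < (Q' {ω}).toReal :=
        ENNReal.toReal_pos (hQ'pos ω h0) (measure_ne_top _ _)
      have hq₀ : 0 < (Q₀ {ω}).toReal :=
        ENNReal.toReal_pos (hQ₀pos ω h0) (measure_ne_top _ _)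
      rw [Real.log_div hq.ne' hq₀.ne', Real.log_div hq.ne' hq'.ne',
        Real.log_div hq'.ne' hq₀.ne']
      ring
  have mid : ∑ ω : Fin (n + 1) → S,
        (Q {ω}).toReal * Real.log ((Q' {ω}).toReal / (Q₀ {ω}).toReal)
      = ∑ ω : Fin (n + 1) → S,
        (Q' {ω}).toReal * Real.log ((Q' {ω}).toReal / (Q₀ {ω}).toReal) := by
    have e1 : ∑ ω : Fin (n + 1) → S,
          (Q {ω}).toReal * Real.log ((Q' {ω}).toReal / (Q₀ {ω}).toReal)
        = ∑ ω : Fin (n + 1) → S, (Q {ω}).toReal * G ω := by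
      refine Finset.sum_congr rfl fun ω _ => ?_
      rcases eq_or_ne (Q {ω}) 0 with hz | hz
      · simp [hz]
      · rw [claim1 ω (by by_contra h; exact hz (hQzero ω h))]
    have e2 : ∑ ω : Fin (n + 1) → S,
          (Q' {ω}).toReal * Real.log ((Q' {ω}).toReal / (Q₀ {ω}).toReal)
        = ∑ ω : Fin (n + 1) → S, (Q' {ω}).toReal * G ω := by
      refine Finset.sum_congr rfl fun ω _ => ?_
      by_cases h0 : ω 0 = x₀
      · rw [claim1 ω h0]
      · simp [hQ'zero ω h0]
    rw [e1, e2]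
    simp only [hG, Finset.mul_sum]
    have perk : ∀ k : Fin n,
        ∑ ω : Fin (n + 1) → S, (Q {ω}).toReal *
          (Real.log (P k (ω k.castSucc) (ω k.succ)).toReal
            - Real.log (P₀ k (ω k.castSucc) (ω k.succ)).toReal)
        = ∑ ω : Fin (n + 1) → S, (Q' {ω}).toReal *
          (Real.log (P k (ω k.castSucc) (ω k.succ)).toReal
            - Real.log (P₀ k (ω k.castSucc) (ω k.succ)).toReal) := by
      intro k
      rw [exp_pair Q k (fun a b => Real.log (P k a b).toReal - Real.log (P₀ k a b).toReal),
        exp_pair Q' k (fun a b => Real.log (P k a b).toReal - Real.log (P₀ k a b).toReal)]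
      refine Finset.sum_congr rfl fun a _ => Finset.sum_congr rfl fun b _ => ?_
      have hpair : Q {ω | ω k.castSucc = a ∧ ω k.succ = b}
          = Q' {ω | ω k.castSucc = a ∧ ω k.succ = b} := by
        rw [hQcond k a b, hmarg k.castSucc a,
          markov_measure_pair Q' x₀ A hA hQ'W k a b,
          markov_measure_marg Q' x₀ A hA hQ'W k.castSucc a]
        rw [show ((k.castSucc : Fin (n + 1)) : ℕ) = (k : ℕ) from rfl, hAdef, extKernel_lt]
      rw [hpair]
    calc ∑ ω : Fin (n + 1) → S, ∑ k : Fin n, (Q {ω}).toReal *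
            (Real.log (P k (ω k.castSucc) (ω k.succ)).toReal
              - Real.log (P₀ k (ω k.castSucc) (ω k.succ)).toReal)
        = ∑ k : Fin n, ∑ ω : Fin (n + 1) → S, (Q {ω}).toReal *
            (Real.log (P k (ω k.castSucc) (ω k.succ)).toReal
              - Real.log (P₀ k (ω k.castSucc) (ω k.succ)).toReal) := Finset.sum_comm
      _ = ∑ k : Fin n, ∑ ω : Fin (n + 1) → S, (Q' {ω}).toReal *
            (Real.log (P k (ω k.castSucc) (ω k.succ)).toReal
              - Real.log (P₀ k (ω k.castSucc) (ω k.succ)).toReal) :=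
          Finset.sum_congr rfl fun k _ => perk k
      _ = _ := Finset.sum_comm
  calc ∑ ω : Fin (n + 1) → S, (Q {ω}).toReal * Real.log ((Q {ω}).toReal / (Q₀ {ω}).toReal)
      = ∑ ω : Fin (n + 1) → S,
          ((Q {ω}).toReal * Real.log ((Q {ω}).toReal / (Q' {ω}).toReal)
            + (Q {ω}).toReal * Real.log ((Q' {ω}).toReal / (Q₀ {ω}).toReal)) :=
        Finset.sum_congr rfl fun ω _ => split ω
    _ = (∑ ω : Fin (n + 1) → S, (Q {ω}).toReal * Real.log ((Q {ω}).toReal / (Q' {ω}).toReal))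
        + ∑ ω : Fin (n + 1) → S,
            (Q {ω}).toReal * Real.log ((Q' {ω}).toReal / (Q₀ {ω}).toReal) :=
        Finset.sum_add_distrib
    _ = _ := by rw [mid]
end
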